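/- arXiv:1604.06980 — 8 statements merged into one kernel-verified Lean document; each statement's English description precedes it below -/
import Mathlib

section
/- Let 0 < Ω < π, s ∈ ℤ and m ∈ ℕ. If x and y are both Ω-band-limited sequences and x(t) = y(t) for every t ∈ ℤ \ M_s, then x(t) = y(t) for every t ∈ ℤ. (Thus an Ω-band-limited sequence is uniquely determined by its values outside a block of m+1 consecutive integers, so the class of Ω-band-limited sequences is recoverable.) -/
open MeasureTheory Real Set

def IsBandLimited (Ω : ℝ) (x : ℤ → ℂ) : Prop :=
  ∃ g : ℝ → ℂ, MemLp g 2 (volume.restrict (Set.Icc (-Ω) Ω)) ∧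
    ∀ t : ℤ, x t = (1 / (2 * (Real.pi : ℂ))) *
      ∫ ω in Set.Icc (-Ω) Ω, g ω * Complex.exp (Complex.I * (ω : ℂ) * (t : ℂ))

/-- `Ms s m` is the block of missing points `{s, s+1, ..., s+m}`. -/
def Ms (s : ℤ) (m : ℕ) : Set ℤ := Set.Icc s (s + m)

/-!
The difference `z = x - y` is band-limited and vanishes off `M_s`. Extend the spectrum `g` of
`z` by zero from `[-Ω, Ω]` to the circle `ℝ / 2πℤ`: its `n`-th Fourier coefficient is `z (-n)`,
so only finitely many coefficients are nonzero and the extension is a.e. the trigonometric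
polynomial `e^{-i(s+m)ω} P(e^{iω})` with `P = ∑ₖ z(s + m - k) Xᵏ`. Since `Ω < π`, the extension
vanishes on a set of positive measure outside `[-Ω, Ω]`, so `P` has infinitely many roots on the
unit circle; hence `P = 0` and `z = 0`.
-/

open AddCircle

theorem fourier_natCast_apply {T : ℝ} (k : ℕ) (u : AddCircle T) :
    fourier k u = fourier 1 u ^ k := by
  rw [fourier_apply, fourier_one, natCast_zsmul, toCircle_nsmul, Circle.coe_pow]

namespace AddCircle

variable {T : ℝ} [Fact (0 < T)]

instance nullSingletonClass_volume : NullSingletonClass (volume : Measure (AddCircle T)) where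
  measure_singleton u := by
    obtain ⟨x, rfl⟩ := QuotientAddGroup.mk_surjective u
    rw [← (AddCircle.measurePreserving_mk T 0).measure_preimage
      (measurableSet_singleton _).nullMeasurableSet]
    refine measure_mono_null (fun y hy => ?_)
      ((countable_range fun k : ℤ => x + k • T).measure_zero _)
    obtain ⟨k, hk⟩ := AddSubgroup.mem_zmultiples_iff.1 (QuotientAddGroup.eq.1 hy.symm)
    exact ⟨k, by linarith⟩

theorem volume_le_volume_image_coe {t : ℝ} {s : Set ℝ} (hs : s ⊆ Ioc t (t + T)) :
    volume s ≤ volume ((↑) '' s : Set (AddCircle T)) :=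
  calc volume s = volume.restrict (Ioc t (t + T)) s := (Measure.restrict_eq_self _ hs).symm
    _ ≤ volume.restrict (Ioc t (t + T)) ((↑) ⁻¹' ((↑) '' s : Set (AddCircle T))) :=
      measure_mono (subset_preimage_image _ _)
    _ ≤ volume ((↑) '' s : Set (AddCircle T)) := by
      rw [← (AddCircle.measurePreserving_mk T t).map_eq]
      exact Measure.le_map_apply (AddCircle.measurePreserving_mk T t).measurable.aemeasurable _

end AddCircle

section FourierSeries

variable {T : ℝ} [hT : Fact (0 < T)]

theorem ae_eq_sum_fourier_of_fourierCoeff_eq_zero {F : AddCircle T → ℂ}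
    (hF : MemLp F 2 haarAddCircle) {S : Finset ℤ} (hS : ∀ n ∉ S, fourierCoeff F n = 0) :
    F =ᵐ[haarAddCircle] fun u => ∑ n ∈ S, fourierCoeff F n * fourier n u := by
  have hsum : hF.toLp F =
      ContinuousMap.toLp 2 haarAddCircle ℂ (∑ n ∈ S, fourierCoeff F n • fourier n) := by
    refine (hasSum_fourier_series_L2 (hF.toLp F)).unique ?_
    rw [fourierCoeff_congr_ae hF.coeFn_toLp, map_sum]
    simp only [map_smul]
    exact hasSum_sum_of_ne_finset_zero fun n hn => by rw [hS n hn, zero_smul]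
  filter_upwards [hF.coeFn_toLp, ContinuousMap.coeFn_toLp (𝕜 := ℂ) (p := 2) haarAddCircle
    (∑ n ∈ S, fourierCoeff F n • fourier n)] with u hFu hGu
  rw [← hFu, hsum, hGu]
  simp

open Polynomial in
theorem eq_zero_of_infinite_setOf_sum_fourier_eq_zero (a : ℤ) (m : ℕ) (c : ℕ → ℂ)
    (h : {u : AddCircle T | ∑ k ∈ Finset.range (m + 1), c k * fourier (a + k) u = 0}.Infinite)
    {k : ℕ} (hk : k ≤ m) : c k = 0 := by
  set P : ℂ[X] := ∑ k ∈ Finset.range (m + 1), C (c k) * X ^ k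
  have hsum (u : AddCircle T) : ∑ k ∈ Finset.range (m + 1), c k * fourier (a + k) u =
      fourier a u * P.eval (fourier 1 u) := by
    simp only [P, eval_finsetSum, Finset.mul_sum, eval_mul, eval_C, eval_pow, eval_X, fourier_add,
      fourier_natCast_apply]
    exact Finset.sum_congr rfl fun k _ => by ring
  have hinj : Function.Injective fun u : AddCircle T => fourier 1 u := fun u v huv => by
    simpa only [fourier_one, Circle.coe_inj, (injective_toCircle hT.out.ne').eq_iff] using huv
  have hP : P = 0 := by
    refine P.eq_zero_of_infinite_isRoot ((h.image hinj.injOn).mono ?_)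
    rintro _ ⟨u, hu, rfl⟩
    rw [mem_ofPred_eq, hsum] at hu
    exact (mul_eq_zero.1 hu).resolve_left (Circle.coe_ne_zero _)
  simpa [P, finsetSum_coeff, coeff_C_mul_X_pow, Nat.lt_succ_iff.2 hk] using
    congrArg (coeff · k) hP

theorem fourierCoeff_eq_zero_of_eq_zero_on {F : AddCircle T → ℂ} (hF : MemLp F 2 haarAddCircle)
    {a : ℤ} {m : ℕ} (hspec : ∀ n ∉ Icc a (a + m), fourierCoeff F n = 0)
    {A : Set (AddCircle T)} (hA : volume A ≠ 0) (hFA : ∀ u ∈ A, F u = 0) (n : ℤ) :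
    fourierCoeff F n = 0 := by
  by_cases hn : n ∈ Icc a (a + m)
  swap; · exact hspec n hn
  rw [mem_Icc] at hn
  obtain ⟨k, hk, rfl⟩ : ∃ k : ℕ, k ≤ m ∧ n = a + k := ⟨(n - a).toNat, by omega, by omega⟩
  set c : ℕ → ℂ := fun k => fourierCoeff F (a + k)
  set G : AddCircle T → ℂ := fun u => ∑ k ∈ Finset.range (m + 1), c k * fourier (a + k) u
  have hFG : ∀ᵐ u, F u = G u := by
    have hS : ∀ n ∉ (Finset.range (m + 1)).image fun k : ℕ => a + k, fourierCoeff F n = 0 :=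
      fun n hn => hspec n fun ⟨h₁, h₂⟩ =>
        hn (Finset.mem_image.2 ⟨(n - a).toNat, Finset.mem_range.2 (by omega), by omega⟩)
    rw [volume_eq_smul_haarAddCircle]
    filter_upwards [Measure.ae_smul_measure (ae_eq_sum_fourier_of_fourierCoeff_eq_zero hF hS) _]
      with u hu
    rw [hu, Finset.sum_image fun _ _ _ _ h => by simpa using h]
  have hG : {u | G u = 0}.Infinite := by
    intro hfin
    refine hA (measure_mono_null (fun u hu => ?_)
      (measure_union_null (hfin.measure_zero volume) (ae_iff.1 hFG)))
    by_cases h : F u = G u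
    · exact Or.inl (by rw [mem_ofPred_eq, ← h, hFA u hu])
    · exact Or.inr h
  exact eq_zero_of_infinite_setOf_sum_fourier_eq_zero a m c hG hk

end FourierSeries

theorem integrable_mul_exp_of_memLp {μ : Measure ℝ} [IsFiniteMeasure μ] {g : ℝ → ℂ}
    (hg : MemLp g 2 μ) (t : ℤ) :
    Integrable (fun ω => g ω * Complex.exp (Complex.I * ω * t)) μ :=
  (hg.integrable one_le_two).mul_bdd (by fun_prop) (c := 1) <| .of_forall fun ω => by
    rw [Complex.norm_exp]
    simp

theorem IsBandLimited.sub {Ω : ℝ} {x y : ℤ → ℂ} (hx : IsBandLimited Ω x)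
    (hy : IsBandLimited Ω y) : IsBandLimited Ω (x - y) := by
  obtain ⟨g, hg, hgx⟩ := hx
  obtain ⟨h, hh, hhy⟩ := hy
  refine ⟨g - h, hg.sub hh, fun t => ?_⟩
  simp only [Pi.sub_apply, sub_mul, integral_sub (integrable_mul_exp_of_memLp hg t)
    (integrable_mul_exp_of_memLp hh t), hgx, hhy, mul_sub]

instance fact_two_pi_pos : Fact (0 < 2 * π) := ⟨two_pi_pos⟩

noncomputable def circleSpectrum (Ω : ℝ) (g : ℝ → ℂ) : AddCircle (2 * π) → ℂ :=
  liftIoc (2 * π) (-π) ((Icc (-Ω) Ω).indicator g)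

theorem memLp_circleSpectrum {Ω : ℝ} {g : ℝ → ℂ}
    (hg : MemLp g 2 (volume.restrict (Icc (-Ω) Ω))) : MemLp (circleSpectrum Ω g) 2 haarAddCircle :=
  (((memLp_indicator_iff_restrict measurableSet_Icc).2 hg).restrict _).memLp_liftIoc.haarAddCircle

theorem fourierCoeff_circleSpectrum {Ω : ℝ} (hΩ : Ω < π) (g : ℝ → ℂ) (n : ℤ) :
    fourierCoeff (circleSpectrum Ω g) n = (1 / (2 * (π : ℂ))) *
      ∫ ω in Icc (-Ω) Ω, g ω * Complex.exp (Complex.I * ω * (-n : ℤ)) := by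
  have hsub : Icc (-Ω) Ω ⊆ Ioc (-π) (-π + 2 * π) := fun ω hω =>
    ⟨by linarith [hω.1], by linarith [hω.2]⟩
  rw [← inter_eq_self_of_subset_right hsub, ← setIntegral_indicator measurableSet_Icc,
    circleSpectrum, fourierCoeff_liftIoc_eq, fourierCoeffOn_eq_integral,
    intervalIntegral.integral_of_le (by linarith [pi_pos]), Complex.real_smul]
  congr 1
  · push_cast
    ring
  · refine setIntegral_congr_fun measurableSet_Ioc fun ω _ => ?_
    by_cases hω : ω ∈ Icc (-Ω) Ω
    · simp only [indicator_of_mem hω, fourier_coe_apply, smul_eq_mul]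
      rw [mul_comm]
      congr 2
      push_cast
      field_simp
      ring
    · simp [indicator_of_notMem hω]

theorem circleSpectrum_coe_eq_zero {Ω : ℝ} (g : ℝ → ℂ) {ω : ℝ}
    (hω : ω ∈ Ioc (-π) (-π + 2 * π) \ Icc (-Ω) Ω) : circleSpectrum Ω g ω = 0 := by
  rw [circleSpectrum, liftIoc_coe_apply hω.1, indicator_of_notMem hω.2]

theorem IsBandLimited.eq_zero_of_eq_zero_off_Ms {Ω : ℝ} (hΩ : Ω < π) {z : ℤ → ℂ}
    (hz : IsBandLimited Ω z) {s : ℤ} {m : ℕ} (hzero : ∀ t ∉ Ms s m, z t = 0) (t : ℤ) :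
    z t = 0 := by
  obtain ⟨g, hg, hrep⟩ := hz
  have hcoeff (n : ℤ) : fourierCoeff (circleSpectrum Ω g) n = z (-n) := by
    rw [fourierCoeff_circleSpectrum hΩ, hrep]
  have hgap :
      volume ((↑) '' (Ioc (-π) (-π + 2 * π) \ Icc (-Ω) Ω) : Set (AddCircle (2 * π))) ≠ 0 := by
    refine (lt_of_lt_of_le ?_
      (le_measure_sdiff.trans (volume_le_volume_image_coe sdiff_subset))).ne'
    rw [Real.volume_Ioc, Real.volume_Icc, tsub_pos_iff_lt,
      ENNReal.ofReal_lt_ofReal_iff (by linarith [pi_pos])]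
    linarith
  rw [← neg_neg t, ← hcoeff]
  refine fourierCoeff_eq_zero_of_eq_zero_on (memLp_circleSpectrum hg) (a := -(s + m)) (m := m)
    (fun n hn => ?_) hgap
    (fun _ ⟨ω, hω, hu⟩ => hu ▸ circleSpectrum_coe_eq_zero g hω) _
  rw [hcoeff]
  exact hzero _ fun h => hn (by simp only [Ms, mem_Icc] at h ⊢; omega)

theorem bandlimited_unique_extension_general (Ω : ℝ) (hΩπ : Ω < Real.pi)
    (s : ℤ) (m : ℕ) (x y : ℤ → ℂ)
    (hx : IsBandLimited Ω x) (hy : IsBandLimited Ω y)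
    (hxy : ∀ t : ℤ, t ∉ Ms s m → x t = y t) :
    ∀ t : ℤ, x t = y t := fun t =>
  sub_eq_zero.1 <| (hx.sub hy).eq_zero_of_eq_zero_off_Ms hΩπ
    (fun t ht => sub_eq_zero.2 (hxy t ht)) t

theorem bandlimited_unique_extension (Ω : ℝ) (hΩ0 : 0 < Ω) (hΩπ : Ω < Real.pi)
    (s : ℤ) (m : ℕ) (x y : ℤ → ℂ)
    (hx : IsBandLimited Ω x) (hy : IsBandLimited Ω y)
    (hxy : ∀ t : ℤ, t ∉ Ms s m → x t = y t) :
    ∀ t : ℤ, x t = y t :=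
  bandlimited_unique_extension_general Ω hΩπ s m x y hx hy hxy
end

section
/- Let 0 < Ω < π, s ∈ ℤ, m ∈ ℕ, and let x : ℤ → ℂ be square-summable (Σ_{t∈ℤ} |x(t)|² < ∞). Then there exists an Ω-band-limited sequence x̂ such that Σ_{t∈ℤ\M_s} |x̂(t) − x(t)|² ≤ Σ_{t∈ℤ\M_s} |w(t) − x(t)|² for every Ω-band-limited sequence w, and x̂ is unique: any Ω-band-limited sequence attaining this minimum coincides with x̂ at every t ∈ ℤ. -/
open MeasureTheory Real Set

/-!
Fix a band-limited sequence `w` with spectrum `G ∈ L²[-Ω, Ω]`. Because `Ω < π`, the spectrum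
extended by zero to `(-π, π]` is an `L²` function on the circle whose Fourier coefficients are the
samples `w(-t)`, so by Parseval `G ↦ w` is `(2π)^{-1/2}` times an isometry `L²[-Ω, Ω] → ℓ²(ℤ)` and
the band-limited sequences form a closed subspace `V`. Restricting to the indices outside the
finite block `M_s` has a finite-dimensional kernel, so the image of `V` in `ℓ²(ℤ \ M_s)` is still
closed, and the orthogonal projection of `x|_{ℤ \ M_s}` onto it gives the minimizer.

For uniqueness, the nearest point of a closed subspace is unique, so two minimizers agree off
`M_s` and their difference is band-limited with finitely many nonzero samples. Its spectrum, lifted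
to the circle, is then a trigonometric polynomial that vanishes on the arc `(Ω, π)`; being
real-analytic, it vanishes identically, and the two minimizers coincide.
-/

open scoped ENNReal lp Topology

namespace Submodule

variable {𝕜 E : Type*} [RCLike 𝕜] [NormedAddCommGroup E] [InnerProductSpace 𝕜 E]

theorem forall_norm_sub_le_iff_eq_starProjection {K : Submodule 𝕜 E} [K.HasOrthogonalProjection]
    {u v : E} (hv : v ∈ K) : (∀ w ∈ K, ‖v - u‖ ≤ ‖w - u‖) ↔ v = K.starProjection u := by
  simp only [norm_sub_rev _ u]
  have hbdd : BddBelow (Set.range fun w : K => ‖u - w‖) := ⟨0, by rintro _ ⟨w, rfl⟩; positivity⟩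
  constructor
  · intro h
    have hmin : ‖u - v‖ = ⨅ w : K, ‖u - w‖ :=
      le_antisymm (le_ciInf fun w => h w w.2) (ciInf_le hbdd ⟨v, hv⟩)
    exact (eq_starProjection_of_mem_of_inner_eq_zero hv
      ((K.norm_eq_iInf_iff_inner_eq_zero hv).1 hmin)).symm
  · rintro rfl w hw
    rw [starProjection_minimal]
    exact ciInf_le hbdd ⟨w, hw⟩

theorem isClosed_map_of_rightInverse {𝕜 E F : Type*} [Ring 𝕜] [AddCommGroup E] [Module 𝕜 E]
    [TopologicalSpace E] [AddCommGroup F] [Module 𝕜 F] [TopologicalSpace F]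
    {R : E →L[𝕜] F} {S : F →L[𝕜] E} (hRS : Function.RightInverse S R) {V : Submodule 𝕜 E}
    (hV : IsClosed ((V ⊔ R.ker : Submodule 𝕜 E) : Set E)) :
    IsClosed ((V.map (R : E →ₗ[𝕜] F)) : Set F) := by
  suffices ((V.map (R : E →ₗ[𝕜] F)) : Set F) = S ⁻¹' (V ⊔ R.ker : Submodule 𝕜 E) from
    this ▸ hV.preimage S.continuous
  ext y
  simp only [SetLike.mem_coe, mem_map, Set.mem_preimage, mem_sup, LinearMap.mem_ker,
    ContinuousLinearMap.coe_coe]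
  constructor
  · rintro ⟨v, hv, rfl⟩
    exact ⟨v, hv, S (R v) - v, by simp [hRS (R v)], add_sub_cancel _ _⟩
  · rintro ⟨v, hv, k, hk, hvk⟩
    refine ⟨v, hv, ?_⟩
    have := congrArg R hvk
    rwa [map_add, hk, add_zero, hRS y] at this

end Submodule

theorem LinearMap.eq_starProjection_range_iff {𝕜 M E : Type*} [RCLike 𝕜] [AddCommGroup M]
    [Module 𝕜 M] [NormedAddCommGroup E] [InnerProductSpace 𝕜 E] (f : M →ₗ[𝕜] E)
    [(range f).HasOrthogonalProjection] {u : E} {a : M} :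
    f a = (range f).starProjection u ↔ ∀ b, ‖f a - u‖ ≤ ‖f b - u‖ := by
  rw [← Submodule.forall_norm_sub_le_iff_eq_starProjection (mem_range_self f a)]
  refine ⟨fun h b => h _ (mem_range_self f b), ?_⟩
  rintro h _ ⟨b, rfl⟩
  exact h b

theorem memℓp_two_iff {α E : Type*} [NormedAddCommGroup E] {f : α → E} :
    Memℓp f 2 ↔ Summable fun i => ‖f i‖ ^ 2 := by
  simp [memℓp_gen_iff (by norm_num : 0 < (2 : ℝ≥0∞).toReal)]

noncomputable section

namespace lp

variable {𝕜 α E : Type*} [NormedField 𝕜] [NormedAddCommGroup E] [NormedSpace 𝕜 E]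
  {p : ℝ≥0∞} [Fact (1 ≤ p)]

theorem norm_sq_eq_tsum (f : ℓ²(α, E)) : ‖f‖ ^ 2 = ∑' i, ‖f i‖ ^ 2 := by
  simpa using lp.norm_rpow_eq_tsum (p := 2) (by norm_num) f

variable (𝕜 E p) in
def restrictCLM (hp : p ≠ ∞) (s : Set α) : ℓ^p(α, E) →L[𝕜] ℓ^p(s, E) :=
  LinearMap.mkContinuous
    { toFun f := ⟨fun i => f i,
        memℓp_gen (((lp.memℓp f).summable (p.toReal_pos_iff_ne_top.2 hp)).subtype s)⟩
      map_add' _ _ := rfl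
      map_smul' _ _ := rfl }
    1 fun f => by
      have hp' := p.toReal_pos_iff_ne_top.2 hp
      rw [one_mul]
      refine norm_le_of_tsum_le hp' (norm_nonneg _) ?_
      rw [norm_rpow_eq_tsum hp']
      exact ((lp.memℓp f).summable hp').tsum_subtype_le _ s fun _ => by positivity

theorem hasSum_norm_rpow_extend_zero (hp : p ≠ ∞) {s : Set α} (f : ℓ^p(s, E)) :
    HasSum (fun i => ‖Function.extend Subtype.val f 0 i‖ ^ p.toReal) (‖f‖ ^ p.toReal) := by
  have hp' := p.toReal_pos_iff_ne_top.2 hp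
  rw [← hasSum_subtype_iff_of_support_subset (s := s)]
  · simp only [Function.comp_def, Subtype.val_injective.extend_apply]
    exact hasSum_norm hp' f
  · intro i hi
    by_contra his
    simp [Function.extend_val_apply' his, zero_rpow hp'.ne'] at hi

variable (𝕜 E p)

def extendByZeroCLM (hp : p ≠ ∞) (s : Set α) : ℓ^p(s, E) →L[𝕜] ℓ^p(α, E) :=
  LinearMap.mkContinuous
    { toFun f := ⟨Function.extend Subtype.val f 0,
        memℓp_gen (hasSum_norm_rpow_extend_zero hp f).summable⟩
      map_add' f g := by
        ext i
        have := Function.extend_add Subtype.val (⇑f) (⇑g) (0 : α → E) 0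
        rw [add_zero] at this
        exact congrFun this i
      map_smul' c f := by
        ext i
        by_cases hi : i ∈ s
        · simp [Function.extend_val_apply hi]
        · simp [Function.extend_val_apply' hi] }
    1 fun f => by
      rw [one_mul]
      exact norm_le_of_tsum_le (p.toReal_pos_iff_ne_top.2 hp) (norm_nonneg _)
        (hasSum_norm_rpow_extend_zero hp f).tsum_eq.le

theorem rightInverse_extendByZeroCLM (hp : p ≠ ∞) (s : Set α) :
    Function.RightInverse (extendByZeroCLM 𝕜 E p hp s) (restrictCLM 𝕜 E p hp s) := fun f => by
  ext i
  exact Subtype.val_injective.extend_apply _ _ i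

theorem finiteDimensional_ker_restrictCLM_compl [FiniteDimensional 𝕜 E] (hp : p ≠ ∞)
    {s : Set α} (hs : s.Finite) : FiniteDimensional 𝕜 (restrictCLM 𝕜 E p hp sᶜ).ker := by
  have : Finite s := hs
  let values : (restrictCLM 𝕜 E p hp sᶜ).ker →ₗ[𝕜] s → E :=
    { toFun f i := (f : ℓ^p(α, E)) i
      map_add' _ _ := rfl
      map_smul' _ _ := rfl }
  refine FiniteDimensional.of_injective values fun f g hfg => ?_
  ext i
  by_cases hi : i ∈ s
  · exact congrFun hfg ⟨i, hi⟩
  · have vanish (h : (restrictCLM 𝕜 E p hp sᶜ).ker) : (h : ℓ^p(α, E)) i = 0 :=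
      congrArg (fun y : ℓ^p(↥sᶜ, E) => y ⟨i, hi⟩) (LinearMap.mem_ker.1 h.2)
    rw [vanish f, vanish g]

end lp

theorem lp.isClosed_map_restrictCLM_compl {𝕜 α E : Type*} [NontriviallyNormedField 𝕜]
    [CompleteSpace 𝕜] [NormedAddCommGroup E] [NormedSpace 𝕜 E] [FiniteDimensional 𝕜 E]
    {p : ℝ≥0∞} [Fact (1 ≤ p)] (hp : p ≠ ∞) {V : Submodule 𝕜 ℓ^p(α, E)}
    (hV : IsClosed (V : Set ℓ^p(α, E))) {s : Set α} (hs : s.Finite) :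
    IsClosed ((V.map (restrictCLM 𝕜 E p hp sᶜ : ℓ^p(α, E) →ₗ[𝕜] ℓ^p(↥sᶜ, E))) :
      Set ℓ^p(↥sᶜ, E)) :=
  have := finiteDimensional_ker_restrictCLM_compl 𝕜 E p hp hs
  Submodule.isClosed_map_of_rightInverse (rightInverse_extendByZeroCLM 𝕜 E p hp sᶜ)
    (V.isClosed_sup_finiteDimensional _ hV)

theorem MeasureTheory.Lp.norm_sq_eq_integral {α : Type*} [MeasurableSpace α] {μ : Measure α}
    (f : Lp ℂ 2 μ) : ‖f‖ ^ 2 = ∫ x, ‖f x‖ ^ 2 ∂μ := by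
  have h := congrArg RCLike.re (L2.inner_def (𝕜 := ℂ) f f)
  rw [← integral_re (L2.integrable_inner f f)] at h
  simpa only [inner_self_eq_norm_sq] using h

section TrigPoly

variable {T : ℝ}

theorem eq_toLp_sum_fourier_of_fourierCoeff_eq_zero [Fact (0 < T)]
    (f : Lp ℂ 2 (@AddCircle.haarAddCircle T _)) {S : Finset ℤ}
    (h : ∀ n ∉ S, fourierCoeff f n = 0) :
    f = ContinuousMap.toLp 2 AddCircle.haarAddCircle ℂ (∑ n ∈ S, fourierCoeff f n • fourier n) := by
  simp only [map_sum, map_smul]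
  exact (hasSum_fourier_series_L2 f).unique
    (hasSum_sum_of_ne_finset_zero fun n hn => by rw [h n hn, zero_smul])

theorem sum_fourier_eq_zero_of_eqOn_Ioo (S : Finset ℤ) (c : ℤ → ℂ) {a b : ℝ} (hab : a < b)
    (h : ∀ x ∈ Ioo a b, (∑ n ∈ S, c n • fourier n : C(AddCircle T, ℂ)) x = 0) :
    (∑ n ∈ S, c n • fourier n : C(AddCircle T, ℂ)) = 0 := by
  set P : C(AddCircle T, ℂ) := ∑ n ∈ S, c n • fourier n
  let φ : ℂ → ℂ := fun z => ∑ n ∈ S, c n * Complex.exp (2 * π * Complex.I * n * z / T)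
  have hP : (fun x : ℝ => P x) = φ ∘ (↑) := by
    funext x
    simp [P, φ]
  have hana : AnalyticOnNhd ℝ (fun x : ℝ => P x) univ := fun x _ => by
    rw [hP]
    exact ((by fun_prop : AnalyticAt ℂ φ x).restrictScalars (𝕜 := ℝ)).comp
      (Complex.ofRealCLM.analyticAt x)
  have hev : (fun x : ℝ => P x) =ᶠ[𝓝 ((a + b) / 2)] 0 :=
    Filter.eventually_of_mem (Ioo_mem_nhds (by linarith) (by linarith)) h
  have hzero := hana.eqOn_zero_of_preconnected_of_eventuallyEq_zero isPreconnected_univ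
    (mem_univ _) hev
  ext z
  obtain ⟨x, rfl⟩ := QuotientAddGroup.mk_surjective z
  exact hzero (mem_univ x)

end TrigPoly

section BandLimited

variable {Ω : ℝ} {g : ℝ → ℂ}

def bandCoeff (Ω : ℝ) (g : ℝ → ℂ) (t : ℤ) : ℂ :=
  (1 / (2 * (π : ℂ))) * ∫ ω in Icc (-Ω) Ω, g ω * Complex.exp (Complex.I * ω * t)

theorem neg_pi_lt_neg_pi_add_two_pi : -π < -π + 2 * π := by linarith [pi_pos]

theorem Icc_neg_subset_Ioc_neg_pi (hΩ : Ω < π) : Icc (-Ω) Ω ⊆ Ioc (-π) (-π + 2 * π) :=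
  fun _ ⟨h₁, h₂⟩ => ⟨by linarith, by linarith⟩

theorem bandCoeff_eq_fourierCoeffOn (hΩ : Ω < π) (g : ℝ → ℂ) (t : ℤ) :
    bandCoeff Ω g t =
      fourierCoeffOn neg_pi_lt_neg_pi_add_two_pi ((Icc (-Ω) Ω).indicator g) (-t) := by
  have hint (x : ℝ) : fourier (-(-t)) (x : AddCircle (-π + 2 * π - -π)) •
      (Icc (-Ω) Ω).indicator g x =
      (Icc (-Ω) Ω).indicator (fun ω => g ω * Complex.exp (Complex.I * ω * t)) x := by
    by_cases hx : x ∈ Icc (-Ω) Ω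
    · rw [indicator_of_mem hx, indicator_of_mem hx, fourier_coe_apply, smul_eq_mul, mul_comm]
      congr 2
      push_cast
      field_simp
      ring
    · rw [indicator_of_notMem hx, indicator_of_notMem hx, smul_zero]
  rw [fourierCoeffOn_eq_integral, intervalIntegral.integral_of_le neg_pi_lt_neg_pi_add_two_pi.le,
    funext hint, setIntegral_indicator measurableSet_Icc,
    inter_eq_right.2 (Icc_neg_subset_Ioc_neg_pi hΩ), bandCoeff, Complex.real_smul]
  congr 1
  push_cast
  ring

theorem MeasureTheory.MemLp.indicator_Icc_restrict_Ioc
    (hg : MemLp g 2 (volume.restrict (Icc (-Ω) Ω))) :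
    MemLp ((Icc (-Ω) Ω).indicator g) 2 (volume.restrict (Ioc (-π) (-π + 2 * π))) :=
  ((memLp_indicator_iff_restrict measurableSet_Icc).2 hg).restrict _

theorem hasSum_sq_bandCoeff (hΩ : Ω < π) (hg : MemLp g 2 (volume.restrict (Icc (-Ω) Ω))) :
    HasSum (fun t => ‖bandCoeff Ω g t‖ ^ 2) ((2 * π)⁻¹ * ∫ ω in Icc (-Ω) Ω, ‖g ω‖ ^ 2) := by
  have h := hasSum_sq_fourierCoeffOn neg_pi_lt_neg_pi_add_two_pi hg.indicator_Icc_restrict_Ioc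
  have hsq : (fun x => ‖(Icc (-Ω) Ω).indicator g x‖ ^ 2) =
      (Icc (-Ω) Ω).indicator fun x => ‖g x‖ ^ 2 := by
    funext x
    by_cases hx : x ∈ Icc (-Ω) Ω <;> simp [hx]
  rw [intervalIntegral.integral_of_le neg_pi_lt_neg_pi_add_two_pi.le, hsq,
    setIntegral_indicator measurableSet_Icc, inter_eq_right.2 (Icc_neg_subset_Ioc_neg_pi hΩ),
    show -π + 2 * π - -π = 2 * π by ring, smul_eq_mul] at h
  simp_rw [bandCoeff_eq_fourierCoeffOn hΩ]
  exact (Equiv.neg ℤ).hasSum_iff.2 h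

theorem bandCoeff_congr_ae {h : ℝ → ℂ} (hgh : g =ᵐ[volume.restrict (Icc (-Ω) Ω)] h) :
    bandCoeff Ω g = bandCoeff Ω h := by
  funext t
  rw [bandCoeff, bandCoeff, integral_congr_ae (hgh.mono fun ω hω => by rw [hω])]

theorem MeasureTheory.MemLp.integrable_mul_cexp (hg : MemLp g 2 (volume.restrict (Icc (-Ω) Ω)))
    (t : ℤ) : Integrable (fun ω : ℝ => g ω * Complex.exp (Complex.I * ω * t))
      (volume.restrict (Icc (-Ω) Ω)) := by
  refine (hg.integrable one_le_two).mul_bdd (c := 1)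
    (by fun_prop : Continuous _).aestronglyMeasurable (ae_of_all _ fun ω => le_of_eq ?_)
  rw [show Complex.I * ω * t = ((ω * t : ℝ) : ℂ) * Complex.I by push_cast; ring,
    Complex.norm_exp_ofReal_mul_I]

theorem bandCoeff_add {h : ℝ → ℂ} (hg : MemLp g 2 (volume.restrict (Icc (-Ω) Ω)))
    (hh : MemLp h 2 (volume.restrict (Icc (-Ω) Ω))) :
    bandCoeff Ω (g + h) = bandCoeff Ω g + bandCoeff Ω h := by
  funext t
  simp only [bandCoeff, Pi.add_apply, add_mul]
  rw [integral_add (hg.integrable_mul_cexp t) (hh.integrable_mul_cexp t), mul_add]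

theorem bandCoeff_smul (c : ℂ) : bandCoeff Ω (c • g) = c • bandCoeff Ω g := by
  funext t
  simp only [bandCoeff, Pi.smul_apply, smul_eq_mul, mul_assoc, integral_const_mul]
  ring

variable (Ω) in
def bandSynthesis (hΩ : Ω < π) : Lp ℂ 2 (volume.restrict (Icc (-Ω) Ω)) →ₗ[ℂ] ℓ²(ℤ, ℂ) where
  toFun g := ⟨bandCoeff Ω g, memℓp_two_iff.2 (hasSum_sq_bandCoeff hΩ (Lp.memLp g)).summable⟩
  map_add' g h := lp.ext <| (bandCoeff_congr_ae (Lp.coeFn_add g h)).trans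
    (bandCoeff_add (Lp.memLp g) (Lp.memLp h))
  map_smul' c g := lp.ext <| (bandCoeff_congr_ae (Lp.coeFn_smul c g)).trans (bandCoeff_smul c)

theorem coe_bandSynthesis (hΩ : Ω < π) (G : Lp ℂ 2 (volume.restrict (Icc (-Ω) Ω))) :
    ⇑(bandSynthesis Ω hΩ G) = bandCoeff Ω G :=
  rfl

theorem isBandLimited_bandSynthesis (hΩ : Ω < π) (G : Lp ℂ 2 (volume.restrict (Icc (-Ω) Ω))) :
    IsBandLimited Ω (bandSynthesis Ω hΩ G) :=
  ⟨G, Lp.memLp G, fun _ => rfl⟩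

theorem IsBandLimited.exists_bandSynthesis_eq (hΩ : Ω < π) {w : ℤ → ℂ}
    (hw : IsBandLimited Ω w) : ∃ G, ⇑(bandSynthesis Ω hΩ G) = w := by
  obtain ⟨g, hg, hgw⟩ := hw
  exact ⟨hg.toLp g,
    funext fun t => (congrFun (bandCoeff_congr_ae hg.coeFn_toLp) t).trans (hgw t).symm⟩

theorem norm_bandSynthesis (hΩ : Ω < π) (G : Lp ℂ 2 (volume.restrict (Icc (-Ω) Ω))) :
    ‖bandSynthesis Ω hΩ G‖ = (√(2 * π))⁻¹ * ‖G‖ := by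
  have h := (hasSum_sq_bandCoeff hΩ (Lp.memLp G)).tsum_eq
  rw [← coe_bandSynthesis hΩ, ← lp.norm_sq_eq_tsum, ← Lp.norm_sq_eq_integral] at h
  rw [← sqrt_sq (norm_nonneg _), h, sqrt_mul (by positivity), sqrt_sq (norm_nonneg _), sqrt_inv]

theorem isClosed_range_bandSynthesis (hΩ : Ω < π) :
    IsClosed (LinearMap.range (bandSynthesis Ω hΩ) : Set ℓ²(ℤ, ℂ)) := by
  have hanti : AntilipschitzWith ⟨√(2 * π), sqrt_nonneg _⟩ (bandSynthesis Ω hΩ) :=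
    AddMonoidHomClass.antilipschitz_of_bound _ fun G => by
      show ‖G‖ ≤ √(2 * π) * _
      rw [norm_bandSynthesis, ← mul_assoc, mul_inv_cancel₀ (by positivity), one_mul]
  have hlip := AddMonoidHomClass.lipschitz_of_bound (bandSynthesis Ω hΩ) _
    fun G => (norm_bandSynthesis hΩ G).le
  rw [LinearMap.coe_range]
  exact hanti.isClosed_range hlip.uniformContinuous

theorem bandCoeff_eq_zero_of_finite_support (hΩ : Ω < π)
    (hg : MemLp g 2 (volume.restrict (Icc (-Ω) Ω))) {s : Set ℤ} (hs : s.Finite)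
    (h : ∀ t ∉ s, bandCoeff Ω g t = 0) (t : ℤ) : bandCoeff Ω g t = 0 := by
  have : Fact (0 < 2 * π) := ⟨two_pi_pos⟩
  set f := (Icc (-Ω) Ω).indicator g
  have hf : MemLp (AddCircle.liftIoc (2 * π) (-π) f) 2 AddCircle.haarAddCircle :=
    hg.indicator_Icc_restrict_Ioc.memLp_liftIoc.haarAddCircle
  have hcoeff (n : ℤ) : fourierCoeff hf.toLp n = bandCoeff Ω g (-n) := by
    rw [fourierCoeff_congr_ae hf.coeFn_toLp, fourierCoeff_liftIoc_eq,
      bandCoeff_eq_fourierCoeffOn hΩ, neg_neg]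
  set S := hs.toFinset.image Neg.neg
  have hS : ∀ n ∉ S, fourierCoeff hf.toLp n = 0 := fun n hn => by
    rw [hcoeff]
    exact h _ fun hns => hn (Finset.mem_image.2 ⟨-n, hs.mem_toFinset.2 hns, neg_neg n⟩)
  set P : C(AddCircle (2 * π), ℂ) := ∑ n ∈ S, fourierCoeff hf.toLp n • fourier n
  have hFP : hf.toLp = ContinuousMap.toLp 2 AddCircle.haarAddCircle ℂ P :=
    eq_toLp_sum_fourier_of_fourierCoeff_eq_zero hf.toLp hS
  have hae : AddCircle.liftIoc (2 * π) (-π) f =ᵐ[volume] P := by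
    rw [AddCircle.volume_eq_smul_haarAddCircle]
    refine Measure.ae_smul_measure (hf.coeFn_toLp.symm.trans ?_) _
    rw [hFP]
    exact ContinuousMap.coeFn_toLp (μ := AddCircle.haarAddCircle) (𝕜 := ℂ) P
  have hae' : f =ᵐ[volume.restrict (Ioc (-π) (-π + 2 * π))] fun x => P x := by
    filter_upwards [(AddCircle.measurePreserving_mk (2 * π) (-π)).quasiMeasurePreserving.ae_eq_comp
      hae, ae_restrict_mem measurableSet_Ioc] with x hx hmem
    rwa [Function.comp_apply, AddCircle.liftIoc_coe_apply hmem] at hx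
  have hzero : ∀ x ∈ Ioo (max Ω 0) π, P x = 0 := by
    have hsub : Ioo (max Ω 0) π ⊆ Ioc (-π) (-π + 2 * π) := fun x ⟨h₁, h₂⟩ =>
      ⟨by linarith [le_max_right Ω 0, pi_pos], by linarith⟩
    have hae0 : (fun x : ℝ => P x) =ᵐ[volume.restrict (Ioo (max Ω 0) π)] 0 := by
      filter_upwards [ae_restrict_of_ae_restrict_of_subset hsub hae',
        ae_restrict_mem measurableSet_Ioo] with x hx hmem
      rw [← hx, Pi.zero_apply]
      exact indicator_of_notMem (fun hx' => by linarith [hx'.2, le_max_left Ω 0, hmem.1]) g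
    exact Measure.eqOn_Ioo_of_ae_eq (μ := volume) hae0 (by fun_prop) continuousOn_const
  have hP : P = 0 := sum_fourier_eq_zero_of_eqOn_Ioo S _ (max_lt hΩ pi_pos) hzero
  rw [← neg_neg t, ← hcoeff, hFP, hP, fourierCoeff_toLp]
  simp [fourierCoeff]

theorem bandSynthesis_eq_of_eqOn_compl (hΩ : Ω < π) {s : Set ℤ} (hs : s.Finite)
    {G H : Lp ℂ 2 (volume.restrict (Icc (-Ω) Ω))}
    (h : ∀ t ∉ s, bandSynthesis Ω hΩ G t = bandSynthesis Ω hΩ H t) :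
    bandSynthesis Ω hΩ G = bandSynthesis Ω hΩ H := by
  have hsub (t : ℤ) :
      bandCoeff Ω ⇑(G - H) t = bandSynthesis Ω hΩ G t - bandSynthesis Ω hΩ H t := by
    rw [← coe_bandSynthesis hΩ, map_sub, lp.coeFn_sub, Pi.sub_apply]
  ext t
  rw [← sub_eq_zero, ← hsub]
  exact bandCoeff_eq_zero_of_finite_support hΩ (Lp.memLp _) hs
    (fun t ht => by rw [hsub, h t ht, sub_self]) t

end BandLimited

end

theorem exists_unique_bandlimited_minimizer_general (Ω : ℝ) (hΩπ : Ω < Real.pi)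
    (s : ℤ) (m : ℕ) (x : ℤ → ℂ) (hx : Summable fun t : ℤ => ‖x t‖ ^ 2) :
    ∃ xh : ℤ → ℂ, IsBandLimited Ω xh ∧
      (∀ w : ℤ → ℂ, IsBandLimited Ω w →
        ∑' t : {t : ℤ // t ∉ Ms s m}, ‖xh (t : ℤ) - x (t : ℤ)‖ ^ 2 ≤
          ∑' t : {t : ℤ // t ∉ Ms s m}, ‖w (t : ℤ) - x (t : ℤ)‖ ^ 2) ∧
      (∀ w : ℤ → ℂ, IsBandLimited Ω w →
        (∀ w' : ℤ → ℂ, IsBandLimited Ω w' →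
          ∑' t : {t : ℤ // t ∉ Ms s m}, ‖w (t : ℤ) - x (t : ℤ)‖ ^ 2 ≤
            ∑' t : {t : ℤ // t ∉ Ms s m}, ‖w' (t : ℤ) - x (t : ℤ)‖ ^ 2) →
        ∀ t : ℤ, w t = xh t) := by
  let R := lp.restrictCLM ℂ ℂ 2 ENNReal.ofNat_ne_top (Ms s m)ᶜ
  let A := (R : ℓ²(ℤ, ℂ) →ₗ[ℂ] ℓ²(↥(Ms s m)ᶜ, ℂ)) ∘ₗ bandSynthesis Ω hΩπ
  have hA : IsClosed (LinearMap.range A : Set ℓ²(↥(Ms s m)ᶜ, ℂ)) := by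
    rw [LinearMap.range_comp]
    exact lp.isClosed_map_restrictCLM_compl _ (isClosed_range_bandSynthesis hΩπ) (finite_Icc _ _)
  have : CompleteSpace (LinearMap.range A) := hA.completeSpace_coe
  let X : ℓ²(ℤ, ℂ) := ⟨x, memℓp_two_iff.2 hx⟩
  have hobj (G) : ∑' t : {t : ℤ // t ∉ Ms s m}, ‖bandSynthesis Ω hΩπ G t - x t‖ ^ 2 =
      ‖A G - R X‖ ^ 2 := by
    rw [LinearMap.comp_apply, ContinuousLinearMap.coe_coe, ← map_sub, lp.norm_sq_eq_tsum]
    rfl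
  obtain ⟨G₀, hG₀⟩ := LinearMap.mem_range.1 ((LinearMap.range A).starProjection_apply_mem (R X))
  refine ⟨bandSynthesis Ω hΩπ G₀, isBandLimited_bandSynthesis hΩπ G₀, fun w hw => ?_,
    fun w hw hwmin t => ?_⟩
  · obtain ⟨G, rfl⟩ := hw.exists_bandSynthesis_eq hΩπ
    rw [hobj, hobj]
    gcongr
    exact A.eq_starProjection_range_iff.1 hG₀ G
  · obtain ⟨G, rfl⟩ := hw.exists_bandSynthesis_eq hΩπ
    have hAG : A G = A G₀ := (A.eq_starProjection_range_iff.2 fun G' => by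
      simpa only [hobj, sq_le_sq₀ (norm_nonneg _) (norm_nonneg _)] using
        hwmin _ (isBandLimited_bandSynthesis hΩπ G')).trans hG₀.symm
    exact congrArg (fun y : ℓ²(ℤ, ℂ) => y t) (bandSynthesis_eq_of_eqOn_compl hΩπ (finite_Icc _ _)
      fun t ht => congrArg (fun y : ℓ²(↥(Ms s m)ᶜ, ℂ) => y ⟨t, ht⟩) hAG)

theorem exists_unique_bandlimited_minimizer (Ω : ℝ) (hΩ0 : 0 < Ω) (hΩπ : Ω < Real.pi)
    (s : ℤ) (m : ℕ) (x : ℤ → ℂ) (hx : Summable fun t : ℤ => ‖x t‖ ^ 2) :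
    ∃ xh : ℤ → ℂ, IsBandLimited Ω xh ∧
      (∀ w : ℤ → ℂ, IsBandLimited Ω w →
        ∑' t : {t : ℤ // t ∉ Ms s m}, ‖xh (t : ℤ) - x (t : ℤ)‖ ^ 2 ≤
          ∑' t : {t : ℤ // t ∉ Ms s m}, ‖w (t : ℤ) - x (t : ℤ)‖ ^ 2) ∧
      (∀ w : ℤ → ℂ, IsBandLimited Ω w →
        (∀ w' : ℤ → ℂ, IsBandLimited Ω w' →
          ∑' t : {t : ℤ // t ∉ Ms s m}, ‖w (t : ℤ) - x (t : ℤ)‖ ^ 2 ≤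
            ∑' t : {t : ℤ // t ∉ Ms s m}, ‖w' (t : ℤ) - x (t : ℤ)‖ ^ 2) →
        ∀ t : ℤ, w t = xh t) :=
  exists_unique_bandlimited_minimizer_general Ω hΩπ s m x hx
end

section
/- Let 0 < Ω < π, s ∈ ℤ, m ∈ ℕ, and let y : ℤ → ℂ satisfy y(t) = 0 for all t ∈ ℤ \ M_s and y not identically zero. Then the sequence (h ∘ y)(t) = Σ_{u∈M_s} h(t−u) y(u) is square-summable and satisfies the strict inequality Σ_{t∈ℤ} |(h ∘ y)(t)|² < Σ_{t∈ℤ} |y(t)|². -/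
open Real Set

/-- Ideal low-pass filter kernel: `h(n) = sin(Ω n)/(π n)` for `n ≠ 0`, `h(0) = Ω/π`. -/
noncomputable def lowPass (Ω : ℝ) (n : ℤ) : ℝ :=
  if n = 0 then Ω / Real.pi else Real.sin (Ω * n) / (Real.pi * n)

/-! Put `Y(x) = ∑_{u ∈ M_s} y(u) e^{iux}`. On `(-π, π]` the Fourier coefficients of
`Y · 1_{(-Ω, Ω]}` are exactly `(h ∘ y)(t)`, so Parseval gives
`∑ |h ∘ y|² = (2π)⁻¹ ∫_{-Ω}^{Ω} |Y|²`; for `Ω = π` the kernel is the unit impulse and the same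
identity reads `∑ |y|² = (2π)⁻¹ ∫_{-π}^{π} |Y|²`. The difference is the integral of `|Y|²` over
`Ω < |x| ≤ π`, which is positive because `Y` is a nonzero real-analytic function and so cannot
vanish on an interval. -/

open Complex MeasureTheory Topology

lemma integral_cexp_neg_mul_I_eq_lowPass (Ω : ℝ) (k : ℤ) :
    ∫ x in -Ω..Ω, cexp (-(k * x * I)) = 2 * π * lowPass Ω k := by
  have hπ : (π : ℂ) ≠ 0 := ofReal_ne_zero.mpr pi_ne_zero
  rcases eq_or_ne k 0 with rfl | hk
  · simp [lowPass]
    field_simp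
    ring
  · have hk' : (k : ℂ) ≠ 0 := by exact_mod_cast hk
    have hc : -(k * I) ≠ 0 := by simp [hk', I_ne_zero]
    simp_rw [show ∀ x : ℝ, -((k : ℂ) * x * I) = -(k * I) * x from fun x => by ring]
    rw [integral_exp_mul_complex hc, lowPass, if_neg hk]
    push_cast
    rw [Complex.sin]
    field_simp
    ring_nf
    simp only [I_sq]
    ring_nf

lemma lowPass_pi (k : ℤ) : lowPass π k = if k = 0 then 1 else 0 := by
  unfold lowPass
  split_ifs with hk
  · exact div_self pi_ne_zero
  · rw [mul_comm, Real.sin_int_mul_pi, zero_div]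

lemma sum_lowPass_pi_mul (S : Finset ℤ) (c : ℤ → ℂ) (t : ℤ) :
    ∑ u ∈ S, (lowPass π (t - u) : ℂ) * c u = if t ∈ S then c t else 0 := by
  simp only [lowPass_pi, sub_eq_zero, apply_ite (fun r : ℝ => (r : ℂ)), ofReal_one, ofReal_zero,
    ite_mul, one_mul, zero_mul]
  exact Finset.sum_ite_eq S t c

lemma intervalIntegral_indicator_Ioc {E : Type*} [NormedAddCommGroup E] [NormedSpace ℝ E]
    {a b a' b' : ℝ} (ha : a ≤ a') (hab' : a' ≤ b') (hb : b' ≤ b) (f : ℝ → E) :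
    ∫ x in a..b, (Ioc a' b').indicator f x = ∫ x in a'..b', f x := by
  rw [intervalIntegral.integral_of_le ((ha.trans hab').trans hb),
    intervalIntegral.integral_of_le hab', setIntegral_indicator measurableSet_Ioc,
    inter_eq_right.2 (Ioc_subset_Ioc ha hb)]

noncomputable def trigPoly (S : Finset ℤ) (c : ℤ → ℂ) (x : ℝ) : ℂ :=
  ∑ u ∈ S, c u * cexp (u * x * I)

lemma analyticAt_trigPoly (S : Finset ℤ) (c : ℤ → ℂ) (x : ℝ) :
    AnalyticAt ℝ (trigPoly S c) x := by
  have hexp (u : ℤ) : AnalyticAt ℝ (fun x : ℝ => cexp (u * x * I)) x :=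
    (analyticAt_cexp.restrictScalars (𝕜 := ℝ)).comp
      ((analyticAt_const.mul (ofRealCLM.analyticAt x)).mul analyticAt_const)
  unfold trigPoly
  fun_prop

lemma norm_trigPoly_le (S : Finset ℤ) (c : ℤ → ℂ) (x : ℝ) :
    ‖trigPoly S c x‖ ≤ ∑ u ∈ S, ‖c u‖ := by
  refine (norm_sum_le _ _).trans (Finset.sum_le_sum fun u _ => ?_)
  rw [norm_mul, show (u : ℂ) * x * I = ((u * x : ℝ) : ℂ) * I by push_cast; ring,
    norm_exp_ofReal_mul_I, mul_one]

lemma fourierCoeffOn_indicator_trigPoly (S : Finset ℤ) (c : ℤ → ℂ) {Ω : ℝ} (h0 : 0 ≤ Ω)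
    (hπ : Ω ≤ π) (t : ℤ) :
    fourierCoeffOn (neg_lt_self pi_pos) ((Ioc (-Ω) Ω).indicator (trigPoly S c)) t =
      ∑ u ∈ S, (lowPass Ω (t - u) : ℂ) * c u := by
  have hintegrand (x : ℝ) :
      fourier (-t) (x : AddCircle (π - -π)) * (Ioc (-Ω) Ω).indicator (trigPoly S c) x =
        (Ioc (-Ω) Ω).indicator (fun x => ∑ u ∈ S, c u * cexp (-(((t - u : ℤ) : ℂ) * x * I))) x := by
    simp only [indicator_apply, mul_ite, mul_zero]
    split_ifs
    · rw [fourier_coe_apply, trigPoly, Finset.mul_sum]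
      refine Finset.sum_congr rfl fun u _ => ?_
      rw [mul_left_comm, ← Complex.exp_add]
      congr 2
      field_simp
      push_cast
      ring
    · rfl
  rw [fourierCoeffOn_eq_integral]
  simp_rw [smul_eq_mul, hintegrand]
  rw [intervalIntegral_indicator_Ioc (by linarith) (by linarith) hπ,
    intervalIntegral.integral_finsetSum fun u _ =>
      (by fun_prop : Continuous _).intervalIntegrable _ _]
  simp_rw [intervalIntegral.integral_const_mul, integral_cexp_neg_mul_I_eq_lowPass]
  rw [Finset.smul_sum]
  refine Finset.sum_congr rfl fun u _ => ?_
  have : (π : ℂ) ≠ 0 := ofReal_ne_zero.mpr pi_ne_zero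
  rw [Complex.real_smul]
  push_cast
  field_simp
  ring

lemma hasSum_norm_sq_lowPass_conv (S : Finset ℤ) (c : ℤ → ℂ) {Ω : ℝ} (h0 : 0 ≤ Ω)
    (hπ : Ω ≤ π) :
    HasSum (fun t : ℤ => ‖∑ u ∈ S, (lowPass Ω (t - u) : ℂ) * c u‖ ^ 2)
      ((2 * π)⁻¹ * ∫ x in -Ω..Ω, ‖trigPoly S c x‖ ^ 2) := by
  have hY : Continuous (trigPoly S c) := continuous_iff_continuousAt.2 fun x =>
    (analyticAt_trigPoly S c x).continuousAt
  have hL2 : MemLp ((Ioc (-Ω) Ω).indicator (trigPoly S c)) 2 (volume.restrict (Ioc (-π) π)) :=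
    .of_bound (hY.aestronglyMeasurable.indicator measurableSet_Ioc) (∑ u ∈ S, ‖c u‖)
      (ae_of_all _ fun x => (norm_indicator_le_norm_self _ x).trans (norm_trigPoly_le S c x))
  have hsq : (fun x => ‖(Ioc (-Ω) Ω).indicator (trigPoly S c) x‖ ^ 2) =
      (Ioc (-Ω) Ω).indicator (fun x => ‖trigPoly S c x‖ ^ 2) := by
    ext x
    by_cases hx : x ∈ Ioc (-Ω) Ω <;> simp [hx]
  convert hasSum_sq_fourierCoeffOn (neg_lt_self pi_pos) hL2 using 1
  · simp_rw [fourierCoeffOn_indicator_trigPoly S c h0 hπ]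
  · rw [hsq, intervalIntegral_indicator_Ioc (by linarith) (by linarith) hπ, smul_eq_mul]
    ring_nf

lemma intervalIntegral_norm_sq_pos {E : Type*} [NormedAddCommGroup E] [NormedSpace ℝ E]
    {f : ℝ → E} (hf : ∀ x, AnalyticAt ℝ f x) (hf0 : f ≠ 0) {a b : ℝ} (hab : a < b) :
    0 < ∫ x in a..b, ‖f x‖ ^ 2 := by
  have hc : Continuous f := continuous_iff_continuousAt.2 fun x => (hf x).continuousAt
  rw [intervalIntegral.integral_pos_iff_support_of_nonneg_ae (ae_of_all _ fun x => by positivity)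
    ((by fun_prop : Continuous fun x => ‖f x‖ ^ 2).intervalIntegrable _ _)]
  refine ⟨hab, pos_of_ne_zero fun hnull => hf0 ?_⟩
  have hvanish : ∀ x ∈ Ioo a b, f x = 0 := by
    have hopen : IsOpen (Function.support f ∩ Ioo a b) :=
      (isOpen_ne_fun hc continuous_const).inter isOpen_Ioo
    have hempty := (hopen.measure_eq_zero_iff volume).1 <| measure_mono_null
      (inter_subset_inter (fun x hx => by simpa using hx) Ioo_subset_Ioc_self) hnull
    intro x hx
    by_contra hfx
    exact hempty.subset ⟨hfx, hx⟩
  have hlocal : f =ᶠ[𝓝 ((a + b) / 2)] 0 :=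
    Filter.eventually_of_mem (Ioo_mem_nhds (by linarith) (by linarith)) hvanish
  have hanalytic : AnalyticOnNhd ℝ f univ := fun x _ => hf x
  exact funext fun x => hanalytic.eqOn_zero_of_preconnected_of_eventuallyEq_zero
    isPreconnected_univ (mem_univ _) hlocal (mem_univ x)

lemma intervalIntegral_norm_sq_lt {E : Type*} [NormedAddCommGroup E] [NormedSpace ℝ E]
    {f : ℝ → E} (hf : ∀ x, AnalyticAt ℝ f x) (hf0 : f ≠ 0) {a b : ℝ} (hab : a < b) :
    ∫ x in -a..a, ‖f x‖ ^ 2 < ∫ x in -b..b, ‖f x‖ ^ 2 := by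
  have hint (c d : ℝ) : IntervalIntegrable (fun x => ‖f x‖ ^ 2) volume c d :=
    ((continuous_iff_continuousAt.2 fun x => (hf x).continuousAt).norm.pow 2).intervalIntegrable _ _
  have hleft : 0 ≤ ∫ x in -b..-a, ‖f x‖ ^ 2 :=
    intervalIntegral.integral_nonneg (by linarith) fun x _ => by positivity
  have hright := intervalIntegral_norm_sq_pos hf hf0 hab
  rw [← intervalIntegral.integral_add_adjacent_intervals (hint (-b) (-a)) (hint (-a) b),
    ← intervalIntegral.integral_add_adjacent_intervals (hint (-a) a) (hint a b)]
  linarith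

theorem lowpass_of_finitely_supported_strict_contraction (Ω : ℝ) (hΩ0 : 0 < Ω)
    (hΩπ : Ω < Real.pi) (s : ℤ) (m : ℕ) (y : ℤ → ℂ)
    (hy0 : ∀ t : ℤ, t ∉ Ms s m → y t = 0) (hy : y ≠ 0) :
    (Summable fun t : ℤ =>
      ‖∑ u ∈ Finset.Icc s (s + (m : ℤ)), (lowPass Ω (t - u) : ℂ) * y u‖ ^ 2) ∧
    ∑' t : ℤ, ‖∑ u ∈ Finset.Icc s (s + (m : ℤ)), (lowPass Ω (t - u) : ℂ) * y u‖ ^ 2 <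
      ∑' t : ℤ, ‖y t‖ ^ 2 := by
  set S := Finset.Icc s (s + (m : ℤ))
  have hband := hasSum_norm_sq_lowPass_conv S y hΩ0.le hΩπ.le
  have hfull : HasSum (fun t => ‖y t‖ ^ 2) ((2 * π)⁻¹ * ∫ x in -π..π, ‖trigPoly S y x‖ ^ 2) := by
    convert hasSum_norm_sq_lowPass_conv S y pi_pos.le le_rfl using 3 with t
    rw [sum_lowPass_pi_mul]
    split_ifs with ht
    · rfl
    · rw [hy0 t (by simpa [S, Ms] using ht)]
  have hY : trigPoly S y ≠ 0 := by
    rintro hY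
    have hzero : HasSum (fun t => ‖y t‖ ^ 2) 0 := by simpa [hY] using hfull
    have := (hasSum_zero_iff_of_nonneg fun t => by positivity).1 hzero
    exact hy (funext fun t => by simpa using congrFun this t)
  refine ⟨hband.summable, ?_⟩
  rw [hband.tsum_eq, hfull.tsum_eq]
  exact mul_lt_mul_of_pos_left (intervalIntegral_norm_sq_lt (analyticAt_trigPoly S y) hY hΩπ)
    (by positivity)
end

section
/- Let 0 < Ω < π, s ∈ ℤ, let x : ℤ → ℂ be square-summable, and let x̂ be the unique Ω-band-limited sequence minimizing Σ_{t∈ℤ, t≠s} |w(t) − x(t)|² over all Ω-band-limited sequences w. Then the series Σ_{t∈ℤ, t≠s} x(t) · sinc(Ω(s−t)) converges absolutely and x̂(s) = (Ω/(π−Ω)) · Σ_{t∈ℤ, t≠s} x(t) · sinc(Ω(s−t)). -/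
open MeasureTheory Real Set

/-- `sinc u = sin u / u` for `u ≠ 0`, `sinc 0 = 1`. -/
noncomputable def rsinc (u : ℝ) : ℝ := if u = 0 then 1 else Real.sin u / u

/-!
The kernel `K t = sinc (Ω (s - t))` is itself `Ω`-band-limited, with spectrum `(π / Ω) e^{-iωs}`.
Viewing spectra supported in `[-Ω, Ω] ⊂ (-π, π]` as functions on `ℝ / 2πℤ`, a band-limited
sequence is the sequence of Fourier coefficients of its spectrum, so Parseval's identity yields the
reproducing formula `∑ₜ K t * y t = (π / Ω) * y s` for every band-limited `y`. Since `x̂ + c K` is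
band-limited for every `c`, minimality of `x̂` makes the residual `x̂ - x` orthogonal to `K` in
`ℓ²(ℤ ∖ {s})`. With `K s = 1` this gives
`∑_{t ≠ s} K t * x t = ∑_{t ≠ s} K t * x̂ t = (π / Ω - 1) x̂ s`.
-/

open Complex (I)
open AddCircle
open scoped ComplexConjugate InnerProductSpace

lemma inner_eq_zero_of_forall_norm_le_norm_add_smul {𝕜 E : Type*} [RCLike 𝕜]
    [NormedAddCommGroup E] [InnerProductSpace 𝕜 E] {u v : E}
    (h : ∀ c : 𝕜, ‖u‖ ≤ ‖u + c • v‖) : ⟪u, v⟫_𝕜 = 0 := by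
  have hmin : ‖u - 0‖ = ⨅ w : 𝕜 ∙ v, ‖u - w‖ := by
    refine le_antisymm (le_ciInf fun ⟨w, hw⟩ => ?_) ?_
    · obtain ⟨c, rfl⟩ := Submodule.mem_span_singleton.1 hw
      simpa [sub_eq_add_neg, ← neg_smul] using h (-c)
    · exact (ciInf_le ⟨0, by rintro _ ⟨w, rfl⟩; positivity⟩ (0 : 𝕜 ∙ v)).trans_eq (by simp)
  simpa using (Submodule.norm_eq_iInf_iff_inner_eq_zero _ (Submodule.zero_mem _)).1 hmin v
    (Submodule.mem_span_singleton_self v)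

section SquareSummable

variable {ι : Type*}

lemma memℓp_two_iff_summable_sq {f : ι → ℂ} : Memℓp f 2 ↔ Summable fun i => ‖f i‖ ^ 2 := by
  rw [memℓp_gen_iff (by norm_num)]
  norm_num

lemma lp.norm_sq_eq_tsum_sq (f : lp (fun _ : ι => ℂ) 2) : ‖f‖ ^ 2 = ∑' i, ‖f i‖ ^ 2 := by
  have := lp.norm_rpow_eq_tsum (p := 2) (by norm_num) f
  norm_num at this
  exact_mod_cast this

lemma summable_norm_sub_sq {f g : ι → ℂ} (hf : Summable fun i => ‖f i‖ ^ 2)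
    (hg : Summable fun i => ‖g i‖ ^ 2) : Summable fun i => ‖f i - g i‖ ^ 2 :=
  memℓp_two_iff_summable_sq.1 <|
    (memℓp_two_iff_summable_sq.2 hf).sub (memℓp_two_iff_summable_sq.2 hg)

lemma summable_norm_mul_of_summable_sq {R : Type*} [NormedRing R] {f g : ι → R}
    (hf : Summable fun i => ‖f i‖ ^ 2) (hg : Summable fun i => ‖g i‖ ^ 2) :
    Summable fun i => ‖f i * g i‖ :=
  .of_nonneg_of_le (fun _ => norm_nonneg _)
    (fun i => (norm_mul_le _ _).trans (by nlinarith [two_mul_le_add_sq ‖f i‖ ‖g i‖]))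
    ((hf.add hg).mul_left (1 / 2))

lemma tsum_conj_mul_eq_zero_of_forall_tsum_le {u v : ι → ℂ} (hu : Summable fun i => ‖u i‖ ^ 2)
    (hv : Summable fun i => ‖v i‖ ^ 2)
    (h : ∀ c : ℂ, ∑' i, ‖u i‖ ^ 2 ≤ ∑' i, ‖u i + c * v i‖ ^ 2) :
    ∑' i, conj (v i) * u i = 0 := by
  let U : lp (fun _ : ι => ℂ) 2 := ⟨u, memℓp_two_iff_summable_sq.2 hu⟩
  let V : lp (fun _ : ι => ℂ) 2 := ⟨v, memℓp_two_iff_summable_sq.2 hv⟩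
  have hUV : ∀ c : ℂ, ‖U‖ ≤ ‖U + c • V‖ := fun c => by
    rw [← sq_le_sq₀ (norm_nonneg _) (norm_nonneg _), lp.norm_sq_eq_tsum_sq, lp.norm_sq_eq_tsum_sq]
    exact h c
  have := inner_eq_zero_of_forall_norm_le_norm_add_smul hUV
  rw [inner_eq_zero_symm, lp.inner_eq_tsum] at this
  simpa only [RCLike.inner_apply'] using this

end SquareSummable

lemma HasSum.subtype_ne {β α : Type*} [AddCommGroup α] [TopologicalSpace α]
    [IsTopologicalAddGroup α] {f : β → α} {a : α} (hf : HasSum f a) (b : β) :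
    HasSum (fun t : {t // t ≠ b} => f t) (a - f b) :=
  (hasSum_singleton b f).hasSum_compl_iff.2 (by rwa [add_sub_cancel])

lemma hasSum_conj_fourierCoeff_mul {T : ℝ} [Fact (0 < T)] (F G : Lp ℂ 2 (@haarAddCircle T _)) :
    HasSum (fun n => conj (fourierCoeff F n) * fourierCoeff G n) ⟪F, G⟫_ℂ := by
  have hcoeff : ∀ n, ⟪F, fourierBasis n⟫_ℂ * ⟪fourierBasis n, G⟫_ℂ =
      conj (fourierCoeff F n) * fourierCoeff G n := fun n => by
    rw [← fourierBasis_repr, ← fourierBasis_repr, fourierBasis.repr_apply_apply,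
      fourierBasis.repr_apply_apply, inner_conj_symm]
  simpa only [hcoeff] using fourierBasis.hasSum_inner_mul_inner F G

lemma rsinc_eq_sinc : rsinc = sinc := rfl

lemma mul_sinc (u : ℝ) : u * sinc u = sin u := by
  rcases eq_or_ne u 0 with rfl | hu
  · simp
  · rw [sinc_of_ne_zero hu, mul_div_cancel₀ _ hu]

lemma integral_Icc_exp_I_mul {Ω : ℝ} (hΩ : 0 ≤ Ω) (m : ℝ) :
    ∫ ω in Icc (-Ω) Ω, Complex.exp (I * ω * m) = 2 * Ω * (sinc (Ω * m) : ℂ) := by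
  rw [integral_Icc_eq_integral_Ioc, ← intervalIntegral.integral_of_le (by linarith)]
  rcases eq_or_ne m 0 with rfl | hm
  · simp only [Complex.ofReal_zero, mul_zero, Complex.exp_zero, intervalIntegral.integral_const,
      sub_neg_eq_add, Complex.real_smul, Complex.ofReal_add, mul_one, sinc_zero, Complex.ofReal_one]
    ring
  have hm' : (m : ℂ) ≠ 0 := Complex.ofReal_ne_zero.2 hm
  have hIm : I * m ≠ 0 := mul_ne_zero Complex.I_ne_zero hm'
  have hsinc : (2 * Ω * sinc (Ω * m) : ℂ) = 2 * Complex.sin (Ω * m) / m := by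
    rw [← Complex.ofReal_mul, ← Complex.ofReal_sin, ← mul_sinc]
    push_cast
    field_simp
  simp_rw [mul_right_comm I, integral_exp_mul_complex hIm, hsinc, Complex.sin]
  push_cast
  field_simp
  ring_nf
  simp only [Complex.I_sq]
  ring_nf

def HasSpectrum (Ω : ℝ) (g : ℝ → ℂ) (x : ℤ → ℂ) : Prop :=
  MemLp g 2 (volume.restrict (Icc (-Ω) Ω)) ∧
    ∀ t : ℤ, x t = (1 / (2 * (π : ℂ))) * ∫ ω in Icc (-Ω) Ω, g ω * Complex.exp (I * ω * t)

section HasSpectrum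

variable {Ω : ℝ} {g h : ℝ → ℂ} {x y : ℤ → ℂ}

lemma integrable_mul_exp_I_mul (hg : MemLp g 2 (volume.restrict (Icc (-Ω) Ω))) (t : ℤ) :
    Integrable (fun ω : ℝ => g ω * Complex.exp (I * ω * t)) (volume.restrict (Icc (-Ω) Ω)) :=
  (hg.integrable one_le_two).mul_bdd (c := 1) (by fun_prop) (ae_of_all _ fun ω => by
    rw [Complex.norm_exp]; simp)

lemma HasSpectrum.add_const_mul (hx : HasSpectrum Ω g x) (hy : HasSpectrum Ω h y) (c : ℂ) :
    HasSpectrum Ω (fun ω => g ω + c * h ω) (fun t => x t + c * y t) := by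
  refine ⟨hx.1.add (hy.1.const_mul c), fun t => ?_⟩
  simp_rw [add_mul, mul_assoc c]
  rw [integral_add (integrable_mul_exp_I_mul hx.1 t)
      ((integrable_mul_exp_I_mul hy.1 t).const_mul c),
    integral_const_mul, hx.2 t, hy.2 t]
  ring

lemma hasSpectrum_sinc (hΩ : 0 < Ω) (s : ℤ) :
    HasSpectrum Ω (fun ω => (π / Ω : ℂ) * Complex.exp (-(I * ω * s)))
      (fun t => (rsinc (Ω * (s - t)) : ℂ)) := by
  refine ⟨memLp_top_of_bound (by fun_prop) ‖(π / Ω : ℂ)‖ (ae_of_all _ fun ω => ?_) |>.mono_exponent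
    le_top, fun t => ?_⟩
  · rw [norm_mul, Complex.norm_exp]
    simp
  · have hexp : ∀ ω : ℝ, (π / Ω : ℂ) * Complex.exp (-(I * ω * s)) * Complex.exp (I * ω * t) =
        (π / Ω : ℂ) * Complex.exp (I * ω * (t - s : ℝ)) := fun ω => by
      rw [mul_assoc, ← Complex.exp_add]
      push_cast
      ring_nf
    simp_rw [hexp]
    rw [integral_const_mul, integral_Icc_exp_I_mul hΩ.le, rsinc_eq_sinc, ← sinc_neg]
    have hΩ' : (Ω : ℂ) ≠ 0 := Complex.ofReal_ne_zero.2 hΩ.ne'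
    have hπ : (π : ℂ) ≠ 0 := Complex.ofReal_ne_zero.2 pi_ne_zero
    field_simp
    ring_nf

end HasSpectrum

local instance : Fact (0 < 2 * π) := ⟨two_pi_pos⟩

/-- `g` on `[-Ω, Ω]`, extended by zero to the fundamental domain `(-π, π]` of `ℝ / 2πℤ`. For
`Ω < π`, its `(-t)`-th Fourier coefficient is the value at `t` of the sequence with spectrum `g`. -/
noncomputable def circleExtension (Ω : ℝ) (g : ℝ → ℂ) : AddCircle (2 * π) → ℂ :=
  liftIoc (2 * π) (-π) ((Icc (-Ω) Ω).indicator g)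

section CircleExtension

variable {Ω : ℝ} {g : ℝ → ℂ}

lemma Icc_subset_Ioc_neg_pi (hΩπ : Ω < π) : Icc (-Ω) Ω ⊆ Ioc (-π) (-π + 2 * π) :=
  fun _ hω => ⟨by linarith [hω.1], by linarith [hω.2]⟩

lemma circleExtension_coe (hΩπ : Ω < π) (g : ℝ → ℂ) {ω : ℝ} (hω : ω ∈ Icc (-Ω) Ω) :
    circleExtension Ω g ω = g ω := by
  rw [circleExtension, liftIoc_coe_apply (Icc_subset_Ioc_neg_pi hΩπ hω), indicator_of_mem hω]

lemma memLp_circleExtension (hΩπ : Ω < π) (hg : MemLp g 2 (volume.restrict (Icc (-Ω) Ω))) :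
    MemLp (circleExtension Ω g) 2 haarAddCircle := by
  have hvol : MemLp (circleExtension Ω g) 2 volume := by
    refine MemLp.memLp_liftIoc ?_
    rwa [memLp_indicator_iff_restrict measurableSet_Icc,
      Measure.restrict_restrict measurableSet_Icc,
      inter_eq_left.2 (Icc_subset_Ioc_neg_pi hΩπ)]
  have hpos : ENNReal.ofReal (2 * π) ≠ 0 := (ENNReal.ofReal_pos.2 two_pi_pos).ne'
  have hhaar : (@haarAddCircle (2 * π) _) = (ENNReal.ofReal (2 * π))⁻¹ • volume := by
    rw [volume_eq_smul_haarAddCircle, smul_smul, ENNReal.inv_mul_cancel hpos ENNReal.ofReal_ne_top,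
      one_smul]
  exact hvol.of_measure_le_smul (ENNReal.inv_ne_top.2 hpos) hhaar.le

lemma integral_mul_circleExtension (hΩπ : Ω < π) (φ : AddCircle (2 * π) → ℂ) (g : ℝ → ℂ) :
    ∫ z, φ z * circleExtension Ω g z ∂haarAddCircle =
      (1 / (2 * (π : ℂ))) * ∫ ω in Icc (-Ω) Ω, φ ω * g ω := by
  have hIoc : ∀ y ∈ Ioc (-π) (-π + 2 * π), φ y * circleExtension Ω g y =
      (Icc (-Ω) Ω).indicator (fun ω => φ ω * g ω) y := fun y hy => by
    rw [circleExtension, liftIoc_coe_apply hy, indicator_mul_right]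
  rw [integral_haarAddCircle, ← AddCircle.integral_preimage (2 * π) (-π),
    setIntegral_congr_fun measurableSet_Ioc hIoc, setIntegral_indicator measurableSet_Icc,
    inter_eq_right.2 (Icc_subset_Ioc_neg_pi hΩπ), Complex.real_smul]
  push_cast
  ring

lemma fourierCoeff_circleExtension_neg (hΩπ : Ω < π) (g : ℝ → ℂ) (t : ℤ) :
    fourierCoeff (circleExtension Ω g) (-t) =
      (1 / (2 * (π : ℂ))) * ∫ ω in Icc (-Ω) Ω, g ω * Complex.exp (I * ω * t) := by
  rw [fourierCoeff, neg_neg]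
  simp_rw [smul_eq_mul]
  rw [integral_mul_circleExtension hΩπ]
  congr 2 with ω
  rw [fourier_coe_apply, mul_comm]
  congr 1
  push_cast
  field_simp

end CircleExtension

section Parseval

variable {Ω : ℝ} {g h : ℝ → ℂ} {x y : ℤ → ℂ}

lemma HasSpectrum.fourierCoeff_toLp_neg (hΩπ : Ω < π) (hx : HasSpectrum Ω g x) (t : ℤ) :
    fourierCoeff ((memLp_circleExtension hΩπ hx.1).toLp) (-t) = x t := by
  rw [fourierCoeff_congr_ae (memLp_circleExtension hΩπ hx.1).coeFn_toLp,
    fourierCoeff_circleExtension_neg hΩπ, hx.2 t]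

lemma inner_toLp_circleExtension (hΩπ : Ω < π) (hg : MemLp g 2 (volume.restrict (Icc (-Ω) Ω)))
    (hh : MemLp h 2 (volume.restrict (Icc (-Ω) Ω))) :
    ⟪(memLp_circleExtension hΩπ hg).toLp, (memLp_circleExtension hΩπ hh).toLp⟫_ℂ =
      (1 / (2 * (π : ℂ))) * ∫ ω in Icc (-Ω) Ω, conj (g ω) * h ω := by
  rw [L2.inner_def]
  simp_rw [RCLike.inner_apply']
  rw [integral_congr_ae (by
      filter_upwards [(memLp_circleExtension hΩπ hg).coeFn_toLp,
        (memLp_circleExtension hΩπ hh).coeFn_toLp] with z hgz hhz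
      rw [hgz, hhz]), integral_mul_circleExtension hΩπ,
    setIntegral_congr_fun measurableSet_Icc fun ω hω => by rw [circleExtension_coe hΩπ g hω]]

lemma HasSpectrum.hasSum_conj_mul (hΩπ : Ω < π) (hx : HasSpectrum Ω g x)
    (hy : HasSpectrum Ω h y) :
    HasSum (fun t => conj (x t) * y t)
      ((1 / (2 * (π : ℂ))) * ∫ ω in Icc (-Ω) Ω, conj (g ω) * h ω) := by
  rw [← inner_toLp_circleExtension hΩπ hx.1 hy.1]
  have := (Equiv.neg ℤ).hasSum_iff.2 (hasSum_conj_fourierCoeff_mul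
    (memLp_circleExtension hΩπ hx.1).toLp (memLp_circleExtension hΩπ hy.1).toLp)
  simp only [Function.comp_def, Equiv.neg_apply, hx.fourierCoeff_toLp_neg hΩπ,
    hy.fourierCoeff_toLp_neg hΩπ] at this
  exact this

lemma HasSpectrum.summable_sq (hΩπ : Ω < π) (hx : HasSpectrum Ω g x) :
    Summable fun t => ‖x t‖ ^ 2 := by
  have := (hx.hasSum_conj_mul hΩπ hx).summable
  simp_rw [Complex.conj_mul'] at this
  exact_mod_cast this

lemma HasSpectrum.hasSum_sinc_mul (hΩ : 0 < Ω) (hΩπ : Ω < π) (hx : HasSpectrum Ω g x) (s : ℤ) :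
    HasSum (fun t : ℤ => (rsinc (Ω * (s - t)) : ℂ) * x t) ((π / Ω : ℂ) * x s) := by
  have hconj : ∀ ω : ℝ, conj ((π / Ω : ℂ) * Complex.exp (-(I * ω * s))) * g ω =
      (π / Ω : ℂ) * (g ω * Complex.exp (I * ω * s)) := fun ω => by
    rw [map_mul, ← Complex.exp_conj]
    simp only [map_div₀, Complex.conj_ofReal, map_neg, map_mul, Complex.conj_I, neg_mul,
      map_intCast, neg_neg]
    ring
  convert (hasSpectrum_sinc hΩ s).hasSum_conj_mul hΩπ hx using 1
  · simp_rw [Complex.conj_ofReal]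
  · simp_rw [hconj]
    rw [integral_const_mul, hx.2 s]
    ring

end Parseval

theorem single_missing_value_recovery_formula (Ω : ℝ) (hΩ0 : 0 < Ω) (hΩπ : Ω < Real.pi)
    (s : ℤ) (x : ℤ → ℂ) (hx : Summable fun t : ℤ => ‖x t‖ ^ 2)
    (xh : ℤ → ℂ) (hbl : IsBandLimited Ω xh)
    (hmin : ∀ w : ℤ → ℂ, IsBandLimited Ω w →
      ∑' t : {t : ℤ // t ≠ s}, ‖xh (t : ℤ) - x (t : ℤ)‖ ^ 2 ≤
        ∑' t : {t : ℤ // t ≠ s}, ‖w (t : ℤ) - x (t : ℤ)‖ ^ 2) :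
    Summable (fun t : {t : ℤ // t ≠ s} =>
      ‖x (t : ℤ) * (rsinc (Ω * ((s : ℝ) - (t : ℤ))) : ℂ)‖) ∧
    xh s = ((Ω / (Real.pi - Ω) : ℝ) : ℂ) *
      ∑' t : {t : ℤ // t ≠ s}, x (t : ℤ) * (rsinc (Ω * ((s : ℝ) - (t : ℤ))) : ℂ) := by
  obtain ⟨g, hxh⟩ : ∃ g, HasSpectrum Ω g xh := hbl
  set K : ℤ → ℂ := fun t => (rsinc (Ω * (s - t)) : ℂ)
  have hK := hasSpectrum_sinc hΩ0 s
  have hK2 := hK.summable_sq hΩπ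
  have hxK := summable_norm_mul_of_summable_sq (hx.subtype (· ≠ s)) (hK2.subtype (· ≠ s))
  refine ⟨hxK, ?_⟩
  have horth : ∑' t : {t // t ≠ s}, K t * (xh t - x t) = 0 := by
    simpa only [K, Complex.conj_ofReal] using tsum_conj_mul_eq_zero_of_forall_tsum_le
      ((summable_norm_sub_sq (hxh.summable_sq hΩπ) hx).subtype (· ≠ s)) (hK2.subtype (· ≠ s))
      fun c =>
        (hmin _ ⟨_, hxh.add_const_mul hK c⟩).trans_eq (tsum_congr fun t => by ring_nf)
  have hrest : HasSum (fun t : {t // t ≠ s} => K t * xh t) ((π / Ω : ℂ) * xh s - xh s) := by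
    simpa [K, rsinc_eq_sinc] using (hxh.hasSum_sinc_mul hΩ0 hΩπ s).subtype_ne s
  have hsum : ∑' t : {t // t ≠ s}, x t * K t = ((π / Ω : ℂ) - 1) * xh s := by
    have hKx : Summable fun t : {t // t ≠ s} => K t * x t :=
      (Summable.of_norm hxK).congr fun t => mul_comm _ _
    simp_rw [mul_sub] at horth
    rw [hrest.summable.tsum_sub hKx, hrest.tsum_eq, sub_eq_zero] at horth
    simp_rw [mul_comm (x _), ← horth]
    ring
  rw [hsum]
  have hΩ : (Ω : ℂ) ≠ 0 := Complex.ofReal_ne_zero.2 hΩ0.ne'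
  have hπΩ : (π : ℂ) - Ω ≠ 0 := sub_ne_zero.2 (Complex.ofReal_injective.ne hΩπ.ne')
  push_cast
  field_simp
end

section
/- Let ω₀ ∈ (0, π], m ∈ ℕ, M = {0, 1, ..., m}, and let x : ℤ → ℂ satisfy Σ_{t∈ℤ} |t|^m |x(t)| < ∞. Then there exists a unique sequence x̂ : ℤ → ℂ such that x̂(t) = x(t) for all t ∈ ℤ \ M and Σ_{t∈ℤ} (−it)^p e^{−iω₀t} x̂(t) = 0 for every p ∈ {0, 1, ..., m} (all these series converging absolutely). Moreover, the vector y = (x̂(0), x̂(1), ..., x̂(m)) ∈ ℂ^{m+1} is the unique solution of the linear system B(ω₀) y = z, where z_p = −Σ_{t∈ℤ\M} (−it)^p e^{−iω₀t} x(t). -/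
open Real

/-- The matrix `B(ω)` with entries `B(ω)_{p,k} = (-i k)^p e^{-iωk}`. -/
noncomputable def Bmat (m : ℕ) (ω : ℝ) : Matrix (Fin (m + 1)) (Fin (m + 1)) ℂ :=
  Matrix.of fun p k : Fin (m + 1) =>
    (-Complex.I * ((k : ℕ) : ℂ)) ^ (p : ℕ) * Complex.exp (-Complex.I * (ω : ℂ) * ((k : ℕ) : ℂ))

/-!
Split each series `∑ₜ (-it)^p e^{-iω₀t} x̂(t)` into its finitely many terms with `t ∈ {0, …, m}`
and the tail over the complement. The tail only involves `x`, and the finite part is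
`(B(ω₀) y)_p` with `y = (x̂(0), …, x̂(m))`, so the degeneracy conditions say exactly that
`B(ω₀) y = z`. Since `B(ω₀)` is a transposed Vandermonde matrix on the distinct nodes `-ik`
times an invertible diagonal matrix, this system has exactly one solution, and `x̂` is `x`
with its values on `{0, …, m}` replaced by that solution.
-/

open Matrix Filter

/-- The `p`-th derivative in `ω` of `e^{-iωt}`. -/
noncomputable def derivKernel (ω : ℝ) (p : ℕ) (t : ℤ) : ℂ :=
  (-Complex.I * (t : ℂ)) ^ p * Complex.exp (-Complex.I * (ω : ℂ) * (t : ℂ))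

def IsDegenerateExtension (ω : ℝ) (m : ℕ) (x w : ℤ → ℂ) : Prop :=
  (∀ t : ℤ, t ∉ Set.Icc (0 : ℤ) m → w t = x t) ∧
    ∀ p : Fin (m + 1),
      Summable (fun t : ℤ => ‖derivKernel ω p t * w t‖) ∧ ∑' t : ℤ, derivKernel ω p t * w t = 0

noncomputable def tailMoments (m : ℕ) (ω : ℝ) (x : ℤ → ℂ) : Fin (m + 1) → ℂ :=
  fun p => -∑' t : {t : ℤ // t ∉ Set.Icc (0 : ℤ) m}, derivKernel ω p t * x t

lemma norm_derivKernel (ω : ℝ) (p : ℕ) (t : ℤ) : ‖derivKernel ω p t‖ = |(t : ℝ)| ^ p := by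
  simp [derivKernel, Complex.norm_exp]

lemma summable_norm_derivKernel_mul {m p : ℕ} (ω : ℝ) {x : ℤ → ℂ}
    (hx : Summable fun t : ℤ => |(t : ℝ)| ^ m * ‖x t‖) (hp : p ≤ m) :
    Summable fun t : ℤ => ‖derivKernel ω p t * x t‖ := by
  refine Summable.of_norm_bounded_eventually hx ?_
  filter_upwards [(Set.finite_singleton (0 : ℤ)).eventually_cofinite_notMem] with t ht
  have h_one_le : (1 : ℝ) ≤ |(t : ℝ)| := by
    exact_mod_cast Int.one_le_abs (Set.mem_singleton_iff.not.1 ht)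
  rw [norm_norm, norm_mul, norm_derivKernel]
  gcongr

lemma Bmat_apply (m : ℕ) (ω : ℝ) (p k : Fin (m + 1)) :
    Bmat m ω p k = derivKernel ω p (k : ℕ) := by
  simp [Bmat, derivKernel]

lemma Bmat_eq_vandermonde_mul_diagonal (m : ℕ) (ω : ℝ) :
    Bmat m ω = (vandermonde fun k : Fin (m + 1) => -Complex.I * ((k : ℕ) : ℂ))ᵀ *
      diagonal fun k : Fin (m + 1) => Complex.exp (-Complex.I * (ω : ℂ) * ((k : ℕ) : ℂ)) := by
  ext p k
  simp [Bmat, mul_diagonal, vandermonde]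

lemma isUnit_Bmat (m : ℕ) (ω : ℝ) : IsUnit (Bmat m ω) := by
  have h_nodes : Function.Injective fun k : Fin (m + 1) => -Complex.I * ((k : ℕ) : ℂ) := by
    intro k l hkl
    simpa [Complex.I_ne_zero, Fin.val_inj] using hkl
  rw [isUnit_iff_isUnit_det, Bmat_eq_vandermonde_mul_diagonal, det_mul, det_transpose,
    det_diagonal, isUnit_iff_ne_zero]
  exact mul_ne_zero (det_vandermonde_ne_zero_iff.2 h_nodes)
    (Finset.prod_ne_zero_iff.2 fun k _ => Complex.exp_ne_zero _)

lemma sum_Icc_zero_eq_sum_fin {α : Type*} [AddCommMonoid α] (m : ℕ) (g : ℤ → α) :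
    ∑ t ∈ Finset.Icc (0 : ℤ) m, g t = ∑ k : Fin (m + 1), g (k : ℕ) := by
  rw [Int.Icc_eq_finset_map, Finset.sum_map, Fin.sum_univ_eq_sum_range (fun n => g n)]
  simp

lemma Summable.tsum_eq_sum_fin_add_tsum_compl {α : Type*} [AddCommGroup α] [TopologicalSpace α]
    [IsTopologicalAddGroup α] [T2Space α] (m : ℕ) {g : ℤ → α} (hg : Summable g) :
    ∑' t, g t = ∑ k : Fin (m + 1), g (k : ℕ) + ∑' t : {t : ℤ // t ∉ Set.Icc (0 : ℤ) m}, g t := by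
  rw [← hg.sum_add_tsum_compl (s := Finset.Icc (0 : ℤ) m), sum_Icc_zero_eq_sum_fin, Finset.coe_Icc]
  rfl

lemma tsum_derivKernel_mul_eq {m : ℕ} (ω : ℝ) {x w : ℤ → ℂ}
    (hw : ∀ t : ℤ, t ∉ Set.Icc (0 : ℤ) m → w t = x t) (p : Fin (m + 1))
    (hs : Summable fun t : ℤ => derivKernel ω p t * w t) :
    ∑' t, derivKernel ω p t * w t = (Bmat m ω *ᵥ fun k => w (k : ℕ)) p - tailMoments m ω x p := by
  rw [hs.tsum_eq_sum_fin_add_tsum_compl m, tailMoments, sub_neg_eq_add, mulVec, dotProduct]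
  simp only [Bmat_apply]
  exact congrArg _ (tsum_congr fun t => by rw [hw t t.2])

lemma isDegenerateExtension_iff {ω : ℝ} {m : ℕ} {x w : ℤ → ℂ}
    (hx : Summable fun t : ℤ => |(t : ℝ)| ^ m * ‖x t‖) :
    IsDegenerateExtension ω m x w ↔
      (∀ t : ℤ, t ∉ Set.Icc (0 : ℤ) m → w t = x t) ∧
        Bmat m ω *ᵥ (fun k => w (k : ℕ)) = tailMoments m ω x := by
  refine and_congr_right fun hw => ?_
  have h_cofinite : x =ᶠ[cofinite] w :=
    (Set.finite_Icc (0 : ℤ) m).eventually_cofinite_notMem.mono fun t ht => (hw t ht).symm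
  have hs (p : Fin (m + 1)) : Summable fun t : ℤ => ‖derivKernel ω p t * w t‖ :=
    (summable_norm_derivKernel_mul ω hx p.is_le).congr_cofinite
      (h_cofinite.mono fun t ht => by simp only [ht])
  simp only [hs, true_and, tsum_derivKernel_mul_eq ω hw _ (hs _).of_norm, sub_eq_zero, funext_iff]

noncomputable def replaceIcc (m : ℕ) (x : ℤ → ℂ) (y : Fin (m + 1) → ℂ) : ℤ → ℂ :=
  fun t => if t ∈ Set.Icc (0 : ℤ) m then y (Fin.ofNat (m + 1) t.toNat) else x t

lemma replaceIcc_of_notMem {m : ℕ} {x : ℤ → ℂ} {y : Fin (m + 1) → ℂ} {t : ℤ}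
    (ht : t ∉ Set.Icc (0 : ℤ) m) : replaceIcc m x y t = x t :=
  if_neg ht

lemma replaceIcc_natCast {m : ℕ} (x : ℤ → ℂ) (y : Fin (m + 1) → ℂ) (k : Fin (m + 1)) :
    replaceIcc m x y (k : ℕ) = y k := by
  have hk : ((k : ℕ) : ℤ) ∈ Set.Icc (0 : ℤ) m := ⟨by positivity, by exact_mod_cast k.is_le⟩
  simp [replaceIcc, hk]

lemma eq_replaceIcc {m : ℕ} {x w : ℤ → ℂ} {y : Fin (m + 1) → ℂ}
    (hw : ∀ t : ℤ, t ∉ Set.Icc (0 : ℤ) m → w t = x t) (hy : ∀ k : Fin (m + 1), w (k : ℕ) = y k) :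
    w = replaceIcc m x y := by
  funext t
  by_cases ht : t ∈ Set.Icc (0 : ℤ) m
  · lift t to ℕ using ht.1
    have htm : t < m + 1 := by have := ht.2; omega
    exact (hy ⟨t, htm⟩).trans (replaceIcc_natCast x y ⟨t, htm⟩).symm
  · rw [hw t ht, replaceIcc_of_notMem ht]

theorem exists_unique_degenerate_extension_general (ω₀ : ℝ)
    (m : ℕ) (x : ℤ → ℂ) (hx : Summable fun t : ℤ => |(t : ℝ)| ^ m * ‖x t‖) :
    ∃ xh : ℤ → ℂ,
      ((∀ t : ℤ, t ∉ Set.Icc (0 : ℤ) m → xh t = x t) ∧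
        ∀ p : Fin (m + 1),
          Summable (fun t : ℤ =>
            ‖(-Complex.I * (t : ℂ)) ^ (p : ℕ) * Complex.exp (-Complex.I * (ω₀ : ℂ) * (t : ℂ)) * xh t‖) ∧
          ∑' t : ℤ,
            (-Complex.I * (t : ℂ)) ^ (p : ℕ) * Complex.exp (-Complex.I * (ω₀ : ℂ) * (t : ℂ)) * xh t = 0) ∧
      (∀ y : ℤ → ℂ,
        ((∀ t : ℤ, t ∉ Set.Icc (0 : ℤ) m → y t = x t) ∧
          ∀ p : Fin (m + 1),
            Summable (fun t : ℤ =>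
              ‖(-Complex.I * (t : ℂ)) ^ (p : ℕ) * Complex.exp (-Complex.I * (ω₀ : ℂ) * (t : ℂ)) * y t‖) ∧
            ∑' t : ℤ,
              (-Complex.I * (t : ℂ)) ^ (p : ℕ) * Complex.exp (-Complex.I * (ω₀ : ℂ) * (t : ℂ)) * y t = 0) →
        y = xh) ∧
      ((Bmat m ω₀).mulVec (fun k : Fin (m + 1) => xh ((k : ℕ) : ℤ)) =
        (fun p : Fin (m + 1) =>
          -∑' t : {t : ℤ // t ∉ Set.Icc (0 : ℤ) m},
            (-Complex.I * ((t : ℤ) : ℂ)) ^ (p : ℕ) *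
              Complex.exp (-Complex.I * (ω₀ : ℂ) * ((t : ℤ) : ℂ)) * x (t : ℤ)) ∧
        ∀ v : Fin (m + 1) → ℂ,
          (Bmat m ω₀).mulVec v =
            (fun p : Fin (m + 1) =>
              -∑' t : {t : ℤ // t ∉ Set.Icc (0 : ℤ) m},
                (-Complex.I * ((t : ℤ) : ℂ)) ^ (p : ℕ) *
                  Complex.exp (-Complex.I * (ω₀ : ℂ) * ((t : ℤ) : ℂ)) * x (t : ℤ)) →
          v = fun k : Fin (m + 1) => xh ((k : ℕ) : ℤ)) := by
  have h_inj := mulVec_injective_iff_isUnit.2 (isUnit_Bmat m ω₀)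
  obtain ⟨y, hy⟩ := mulVec_surjective_iff_isUnit.2 (isUnit_Bmat m ω₀) (tailMoments m ω₀ x)
  have h_restrict : (fun k : Fin (m + 1) => replaceIcc m x y (k : ℕ)) = y :=
    funext (replaceIcc_natCast x y)
  refine ⟨replaceIcc m x y, ?_, fun w hw => ?_, ?_, fun v hv => ?_⟩
  · exact (isDegenerateExtension_iff hx).2
      ⟨fun t ht => replaceIcc_of_notMem ht, by rw [h_restrict, hy]⟩
  · obtain ⟨hwx, hBw⟩ := (isDegenerateExtension_iff hx).1 hw
    exact eq_replaceIcc hwx (congrFun (h_inj (hBw.trans hy.symm)))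
  · rw [h_restrict, hy]
    rfl
  · rw [h_restrict]
    exact h_inj (hv.trans hy.symm)

theorem exists_unique_degenerate_extension (ω₀ : ℝ) (hω₀ : ω₀ ∈ Set.Ioc 0 Real.pi)
    (m : ℕ) (x : ℤ → ℂ) (hx : Summable fun t : ℤ => |(t : ℝ)| ^ m * ‖x t‖) :
    ∃ xh : ℤ → ℂ,
      ((∀ t : ℤ, t ∉ Set.Icc (0 : ℤ) m → xh t = x t) ∧
        ∀ p : Fin (m + 1),
          Summable (fun t : ℤ =>
            ‖(-Complex.I * (t : ℂ)) ^ (p : ℕ) * Complex.exp (-Complex.I * (ω₀ : ℂ) * (t : ℂ)) * xh t‖) ∧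
          ∑' t : ℤ,
            (-Complex.I * (t : ℂ)) ^ (p : ℕ) * Complex.exp (-Complex.I * (ω₀ : ℂ) * (t : ℂ)) * xh t = 0) ∧
      (∀ y : ℤ → ℂ,
        ((∀ t : ℤ, t ∉ Set.Icc (0 : ℤ) m → y t = x t) ∧
          ∀ p : Fin (m + 1),
            Summable (fun t : ℤ =>
              ‖(-Complex.I * (t : ℂ)) ^ (p : ℕ) * Complex.exp (-Complex.I * (ω₀ : ℂ) * (t : ℂ)) * y t‖) ∧
            ∑' t : ℤ,
              (-Complex.I * (t : ℂ)) ^ (p : ℕ) * Complex.exp (-Complex.I * (ω₀ : ℂ) * (t : ℂ)) * y t = 0) →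
        y = xh) ∧
      ((Bmat m ω₀).mulVec (fun k : Fin (m + 1) => xh ((k : ℕ) : ℤ)) =
        (fun p : Fin (m + 1) =>
          -∑' t : {t : ℤ // t ∉ Set.Icc (0 : ℤ) m},
            (-Complex.I * ((t : ℤ) : ℂ)) ^ (p : ℕ) *
              Complex.exp (-Complex.I * (ω₀ : ℂ) * ((t : ℤ) : ℂ)) * x (t : ℤ)) ∧
        ∀ v : Fin (m + 1) → ℂ,
          (Bmat m ω₀).mulVec v =
            (fun p : Fin (m + 1) =>
              -∑' t : {t : ℤ // t ∉ Set.Icc (0 : ℤ) m},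
                (-Complex.I * ((t : ℤ) : ℂ)) ^ (p : ℕ) *
                  Complex.exp (-Complex.I * (ω₀ : ℂ) * ((t : ℤ) : ℂ)) * x (t : ℤ)) →
          v = fun k : Fin (m + 1) => xh ((k : ℕ) : ℤ)) :=
  exists_unique_degenerate_extension_general ω₀ m x hx
end

section
/- Let ω₀ ∈ (0, π], m ∈ ℕ and M = {0, 1, ..., m}. Suppose x, y : ℤ → ℂ both satisfy Σ_{t∈ℤ} |t|^m |x(t)| < ∞ and Σ_{t∈ℤ} |t|^m |y(t)| < ∞, both satisfy Σ_{t∈ℤ} (−it)^p e^{−iω₀t} x(t) = 0 and Σ_{t∈ℤ} (−it)^p e^{−iω₀t} y(t) = 0 for every p ∈ {0, 1, ..., m}, and x(t) = y(t) for all t ∈ ℤ \ M. Then x(t) = y(t) for all t ∈ ℤ. (Thus the class X₀ of sequences degenerate of order m is recoverable.) -/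
/-!
The difference `z = x - y` vanishes outside `{0, …, m}`, so its vanishing moments
`∑ t, (-i t)^p e^{-iω₀t} z t` (`p ≤ m`) say that the `m + 1` values `e^{-iω₀t} z t` are
annihilated by the Vandermonde matrix on the distinct nodes `-i t`, `0 ≤ t ≤ m`.
That matrix is invertible and `e^{-iω₀t} ≠ 0`, so `z = 0`.
-/

open Complex Finset

/-- The termwise `p`-th derivative at `ω` of the transform `X(e^{iω}) = ∑ t, x t e^{-iωt}`. -/
noncomputable def dtftDeriv (x : ℤ → ℂ) (p : ℕ) (ω : ℝ) : ℂ :=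
  ∑' t : ℤ, (-I * t) ^ p * exp (-I * ω * t) * x t

lemma norm_neg_I_mul_pow_mul_exp_mul (ω : ℝ) (p : ℕ) (t : ℤ) (a : ℂ) :
    ‖(-I * t) ^ p * exp (-I * ω * t) * a‖ = |(t : ℝ)| ^ p * ‖a‖ := by
  have h_exp : ‖exp (-I * ω * t)‖ = 1 := by
    rw [norm_exp]
    simp [mul_re, mul_im]
  rw [norm_mul, norm_mul, h_exp, mul_one, norm_pow, norm_mul]
  simp [norm_intCast]

lemma summable_dtftDeriv_term {m p : ℕ} (hp : p ≤ m) (ω : ℝ) {x : ℤ → ℂ}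
    (hx : Summable fun t : ℤ => |(t : ℝ)| ^ m * ‖x t‖) :
    Summable fun t : ℤ => (-I * t) ^ p * exp (-I * ω * t) * x t := by
  refine hx.of_norm_bounded_eventually ?_
  filter_upwards [(Set.finite_singleton (0 : ℤ)).compl_mem_cofinite] with t ht
  have h_one_le : (1 : ℝ) ≤ |(t : ℝ)| := by
    rw [← Int.cast_abs]
    exact_mod_cast Int.one_le_abs ht
  rw [norm_neg_I_mul_pow_mul_exp_mul]
  gcongr

lemma dtftDeriv_sub {m p : ℕ} (hp : p ≤ m) (ω : ℝ) {x y : ℤ → ℂ}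
    (hx : Summable fun t : ℤ => |(t : ℝ)| ^ m * ‖x t‖)
    (hy : Summable fun t : ℤ => |(t : ℝ)| ^ m * ‖y t‖) :
    dtftDeriv (x - y) p ω = dtftDeriv x p ω - dtftDeriv y p ω := by
  rw [dtftDeriv, dtftDeriv, dtftDeriv, ← (summable_dtftDeriv_term hp ω hx).tsum_sub
    (summable_dtftDeriv_term hp ω hy)]
  simp only [Pi.sub_apply, mul_sub]

/-- Invertibility of the Vandermonde matrix, for nodes indexed by a finset. -/
theorem Finset.eq_zero_of_forall_sum_mul_pow_eq_zero {ι R : Type*} [CommRing R] [IsDomain R]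
    {s : Finset ι} {c w : ι → R} (hc : Set.InjOn c s)
    (hcw : ∀ p < #s, ∑ t ∈ s, w t * c t ^ p = 0) :
    ∀ t ∈ s, w t = 0 := by
  set e : Fin #s ≃ s := s.equivFin.symm
  have h_inj : Function.Injective fun k => c (e k) := fun k l hkl =>
    e.injective (Subtype.ext (hc (e k).2 (e l).2 hkl))
  have h_zero : (fun k => w (e k)) = 0 := by
    refine Matrix.eq_zero_of_forall_pow_sum_mul_pow_eq_zero h_inj fun p => ?_
    rw [e.sum_comp (fun t : s => w t * c t ^ (p : ℕ)), s.sum_coe_sort (fun t => w t * c t ^ (p : ℕ))]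
    exact hcw p p.isLt
  intro t ht
  simpa using congrFun h_zero (e.symm ⟨t, ht⟩)

theorem degenerate_class_recoverable_general (ω₀ : ℝ) (m : ℕ)
    (x y : ℤ → ℂ)
    (hx : Summable fun t : ℤ => |(t : ℝ)| ^ m * ‖x t‖)
    (hy : Summable fun t : ℤ => |(t : ℝ)| ^ m * ‖y t‖)
    (hx0 : ∀ p : Fin (m + 1),
      ∑' t : ℤ, (-Complex.I * (t : ℂ)) ^ (p : ℕ) *
        Complex.exp (-Complex.I * (ω₀ : ℂ) * (t : ℂ)) * x t = 0)
    (hy0 : ∀ p : Fin (m + 1),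
      ∑' t : ℤ, (-Complex.I * (t : ℂ)) ^ (p : ℕ) *
        Complex.exp (-Complex.I * (ω₀ : ℂ) * (t : ℂ)) * y t = 0)
    (hxy : ∀ t : ℤ, t ∉ Set.Icc (0 : ℤ) m → x t = y t) :
    ∀ t : ℤ, x t = y t := by
  have h_supp : ∀ t ∉ Icc (0 : ℤ) m, (x - y) t = 0 := fun t ht =>
    sub_eq_zero.2 (hxy t (by simpa using ht))
  have h_moments : ∀ p < #(Icc (0 : ℤ) m),
      ∑ t ∈ Icc (0 : ℤ) m, exp (-I * ω₀ * t) * (x - y) t * (-I * t) ^ p = 0 := by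
    intro p hp
    have hpm : p ≤ m := by rw [Int.card_Icc] at hp; omega
    have h_tsum := dtftDeriv_sub hpm ω₀ hx hy
    rw [dtftDeriv, dtftDeriv, dtftDeriv, hx0 ⟨p, by omega⟩, hy0 ⟨p, by omega⟩, sub_zero,
      tsum_eq_sum fun t ht => by rw [h_supp t ht, mul_zero]] at h_tsum
    rw [← h_tsum]
    exact sum_congr rfl fun t _ => by ring
  have h_inj : Set.InjOn (fun t : ℤ => -I * t) (Icc (0 : ℤ) m) := fun a _ b _ hab =>
    Int.cast_injective (mul_left_cancel₀ (neg_ne_zero.2 I_ne_zero) hab)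
  intro t
  by_cases ht : t ∈ Icc (0 : ℤ) m
  · have := eq_zero_of_forall_sum_mul_pow_eq_zero h_inj h_moments t ht
    simpa [exp_ne_zero, sub_eq_zero] using this
  · simpa [sub_eq_zero] using h_supp t ht

theorem degenerate_class_recoverable (ω₀ : ℝ) (hω₀ : ω₀ ∈ Set.Ioc 0 Real.pi) (m : ℕ)
    (x y : ℤ → ℂ)
    (hx : Summable fun t : ℤ => |(t : ℝ)| ^ m * ‖x t‖)
    (hy : Summable fun t : ℤ => |(t : ℝ)| ^ m * ‖y t‖)
    (hx0 : ∀ p : Fin (m + 1),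
      ∑' t : ℤ, (-Complex.I * (t : ℂ)) ^ (p : ℕ) *
        Complex.exp (-Complex.I * (ω₀ : ℂ) * (t : ℂ)) * x t = 0)
    (hy0 : ∀ p : Fin (m + 1),
      ∑' t : ℤ, (-Complex.I * (t : ℂ)) ^ (p : ℕ) *
        Complex.exp (-Complex.I * (ω₀ : ℂ) * (t : ℂ)) * y t = 0)
    (hxy : ∀ t : ℤ, t ∉ Set.Icc (0 : ℤ) m → x t = y t) :
    ∀ t : ℤ, x t = y t :=
  degenerate_class_recoverable_general ω₀ m x y hx hy hx0 hy0 hxy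
end

section
/- Let ω₀ ∈ (0, π], σ₀ ≥ 0 and s ∈ ℤ. For every function F from the set of maps (ℤ \ {s}) → ℂ to ℂ, there exists a sequence x : ℤ → ℂ with Σ_{t∈ℤ} |x(t)| < ∞ and |Σ_{t∈ℤ} e^{−iω₀t} x(t)| ≤ σ₀ such that |F(x restricted to ℤ \ {s}) − x(s)| ≥ σ₀. (Hence no estimator of the missing value x(s) based on the observations x|_{ℤ\{s}} can achieve a worst-case error over the class X_σ smaller than σ₀, so the estimator of Corollary 4 is minimax optimal.) -/
/-! A spike `x = c • δ_s` with `‖c‖ = σ₀` has transform of modulus `σ₀` at every frequency and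
vanishes off `s`, so `F` sees the zero sequence and returns the same value `v` for every such
spike. Of `c = σ₀` and `c = -σ₀`, one lies at distance at least `σ₀` from `v`, since the two are
`2σ₀` apart. -/

open Real

theorem norm_le_norm_sub_or_norm_le_norm_add {E : Type*} [SeminormedAddCommGroup E]
    [NormedSpace ℝ E] (v c : E) :
    ‖c‖ ≤ ‖v - c‖ ∨ ‖c‖ ≤ ‖v + c‖ := by
  by_contra! h
  have : ‖(v + c) - (v - c)‖ ≤ ‖v + c‖ + ‖v - c‖ := norm_sub_le _ _
  rw [add_sub_sub_cancel, ← two_smul ℝ c, norm_smul, Real.norm_two] at this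
  linarith [h.1, h.2]

theorem Complex.exists_norm_eq_le_norm_sub (v : ℂ) {r : ℝ} (hr : 0 ≤ r) :
    ∃ c : ℂ, ‖c‖ = r ∧ r ≤ ‖v - c‖ := by
  have hnorm : ‖(r : ℂ)‖ = r := by simp [abs_of_nonneg hr]
  rcases norm_le_norm_sub_or_norm_le_norm_add v (r : ℂ) with h | h <;> rw [hnorm] at h
  · exact ⟨r, hnorm, h⟩
  · exact ⟨-r, by rw [norm_neg, hnorm], by rwa [sub_neg_eq_add]⟩

theorem summable_norm_pi_single {ι E : Type*} [DecidableEq ι] [SeminormedAddCommGroup E]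
    (i : ι) (c : E) : Summable fun j => ‖(Pi.single i c : ι → E) j‖ := by
  simpa only [Pi.single_apply, apply_ite, norm_zero] using (hasSum_ite_eq i ‖c‖).summable

theorem tsum_mul_pi_single {ι R : Type*} [DecidableEq ι] [NonUnitalNonAssocSemiring R]
    [TopologicalSpace R] (f : ι → R) (i : ι) (c : R) :
    ∑' j, f j * (Pi.single i c : ι → R) j = f i * c := by
  calc ∑' j, f j * (Pi.single i c : ι → R) j = ∑' j, (Pi.single i (f i * c) : ι → R) j :=
        tsum_congr fun j => (Pi.single_mul_right_apply i j f c).symm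
    _ = f i * c := tsum_pi_single i _

theorem Complex.norm_exp_neg_I_mul_ofReal_mul_intCast (ω : ℝ) (t : ℤ) :
    ‖Complex.exp (-Complex.I * (ω : ℂ) * (t : ℂ))‖ = 1 := by
  simp [Complex.norm_exp]

theorem minimax_lower_bound_single_value_general (ω₀ : ℝ)
    (σ₀ : ℝ) (hσ₀ : 0 ≤ σ₀) (s : ℤ)
    (F : ({t : ℤ // t ≠ s} → ℂ) → ℂ) :
    ∃ x : ℤ → ℂ,
      (Summable fun t : ℤ => ‖x t‖) ∧
      ‖∑' t : ℤ, Complex.exp (-Complex.I * (ω₀ : ℂ) * (t : ℂ)) * x t‖ ≤ σ₀ ∧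
      σ₀ ≤ ‖F (fun t : {t : ℤ // t ≠ s} => x (t : ℤ)) - x s‖ := by
  obtain ⟨c, hc, hFc⟩ := Complex.exists_norm_eq_le_norm_sub (F fun _ => 0) hσ₀
  have hrestrict : (fun t : {t : ℤ // t ≠ s} => (Pi.single s c : ℤ → ℂ) t) = fun _ => 0 :=
    funext fun t => Pi.single_eq_of_ne (M := fun _ => ℂ) t.2 c
  refine ⟨Pi.single s c, summable_norm_pi_single s c, ?_, ?_⟩
  · rw [tsum_mul_pi_single, norm_mul, Complex.norm_exp_neg_I_mul_ofReal_mul_intCast, one_mul, hc]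
  · rwa [hrestrict, Pi.single_eq_same]

theorem minimax_lower_bound_single_value (ω₀ : ℝ) (hω₀ : ω₀ ∈ Set.Ioc 0 Real.pi)
    (σ₀ : ℝ) (hσ₀ : 0 ≤ σ₀) (s : ℤ)
    (F : ({t : ℤ // t ≠ s} → ℂ) → ℂ) :
    ∃ x : ℤ → ℂ,
      (Summable fun t : ℤ => ‖x t‖) ∧
      ‖∑' t : ℤ, Complex.exp (-Complex.I * (ω₀ : ℂ) * (t : ℂ)) * x t‖ ≤ σ₀ ∧
      σ₀ ≤ ‖F (fun t : {t : ℤ // t ≠ s} => x (t : ℤ)) - x s‖ :=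
  minimax_lower_bound_single_value_general ω₀ σ₀ hσ₀ s F
end

section
/- Let ω₀ ∈ (0, π], m ∈ ℕ, M = {0, 1, ..., m}, and let x : ℤ → ℂ satisfy Σ_{t∈ℤ} |t|^m |x(t)| < ∞. Let x̂ be the unique sequence with x̂(t) = x(t) for t ∈ ℤ \ M and Σ_{t∈ℤ} (−it)^p e^{−iω₀t} x̂(t) = 0 for all p ∈ {0, ..., m}. Then max_{0 ≤ k ≤ m} |x̂(k)| ≤ ‖B(ω₀)^{−1}‖_{∞→∞} · Σ_{t∈ℤ\M} |t|^m |x(t)|, where ‖·‖_{∞→∞} denotes the operator norm of a matrix acting on ℂ^{m+1} equipped with the supremum norm (i.e., the maximum absolute row sum). In particular, for m = 0 one has |x̂(0)| ≤ Σ_{t∈ℤ, t≠0} |x(t)|. -/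
/-!
Splitting each moment condition into the unknown values `x̂ 0, …, x̂ m` and the tail over `ℤ \ M`
gives the linear system `B(ω₀) v = -(tail moments)`. The matrix `B(ω)` is a transposed Vandermonde
matrix at the distinct nodes `-i k` times an invertible diagonal, so `v = B(ω₀)⁻¹ (-(tail moments))`.
Since `|t| ≥ 1` off `M`, every tail moment is bounded by `∑_{t ∉ M} |t| ^ m |x t|`, and the row-sum
norm of `B(ω₀)⁻¹` converts this into the bound on `v`. For `m = 0`, `B(ω₀) = 1`.
-/

open Real

/-- The `ℓ∞ → ℓ∞` operator norm of a matrix: the maximum absolute row sum. -/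
noncomputable def linftyNorm {n : ℕ} (B : Matrix (Fin (n + 1)) (Fin (n + 1)) ℂ) : ℝ :=
  Finset.univ.sup' ⟨0, Finset.mem_univ 0⟩ fun p : Fin (n + 1) => ∑ k : Fin (n + 1), ‖B p k‖

open Complex
open scoped Matrix

theorem tsum_eq_sum_fin_add_tsum_compl_Icc {α : Type*} [UniformSpace α] [AddCommGroup α]
    [IsUniformAddGroup α] [CompleteSpace α] [T2Space α] {f : ℤ → α} (hf : Summable f) (m : ℕ) :
    ∑' t, f t = ∑ k : Fin (m + 1), f k + ∑' t : {t : ℤ // t ∉ Set.Icc (0 : ℤ) m}, f t := by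
  rw [← hf.sum_add_tsum_subtype_compl (Finset.Icc 0 m)]
  congr 1
  · rw [Int.Icc_eq_finset_map, Finset.sum_map, Fin.sum_univ_eq_sum_range (fun k : ℕ => f k)]
    simp
  · exact tsum_congr_set_coe f (congrArg compl (Finset.coe_Icc 0 (m : ℤ)))

theorem norm_mulVec_apply_le_linftyNorm_mul {n : ℕ} (A : Matrix (Fin (n + 1)) (Fin (n + 1)) ℂ)
    {c : Fin (n + 1) → ℂ} {S : ℝ} (hc : ∀ j, ‖c j‖ ≤ S) (k : Fin (n + 1)) :
    ‖(A *ᵥ c) k‖ ≤ linftyNorm A * S :=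
  calc ‖(A *ᵥ c) k‖ ≤ ∑ j, ‖A k j‖ * ‖c j‖ :=
      (norm_sum_le Finset.univ fun j => A k j * c j).trans_eq (by simp only [norm_mul])
    _ ≤ ∑ j, ‖A k j‖ * S := by gcongr; exact hc _
    _ = (∑ j, ‖A k j‖) * S := Finset.sum_mul _ _ _ |>.symm
    _ ≤ linftyNorm A * S := by
      gcongr
      · exact (norm_nonneg _).trans (hc 0)
      · exact Finset.le_sup' (fun p => ∑ j, ‖A p j‖) (Finset.mem_univ k)

theorem linftyNorm_one (n : ℕ) : linftyNorm (1 : Matrix (Fin (n + 1)) (Fin (n + 1)) ℂ) = 1 := by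
  simp only [linftyNorm, Matrix.one_apply, apply_ite, norm_one, norm_zero, Finset.sum_ite_eq,
    Finset.mem_univ, if_true]
  exact Finset.sup'_const _ _

noncomputable def momentTerm (ω : ℝ) (p : ℕ) (y : ℤ → ℂ) (t : ℤ) : ℂ :=
  (-I * (t : ℂ)) ^ p * exp (-I * (ω : ℂ) * (t : ℂ)) * y t

theorem norm_momentTerm (ω : ℝ) (p : ℕ) (y : ℤ → ℂ) (t : ℤ) :
    ‖momentTerm ω p y t‖ = |(t : ℝ)| ^ p * ‖y t‖ := by
  simp [momentTerm, Complex.norm_exp]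

theorem norm_momentTerm_le {p m : ℕ} (hpm : p ≤ m) (ω : ℝ) (y : ℤ → ℂ) {t : ℤ} (ht : t ≠ 0) :
    ‖momentTerm ω p y t‖ ≤ |(t : ℝ)| ^ m * ‖y t‖ := by
  rw [norm_momentTerm]
  gcongr
  exact_mod_cast Int.one_le_abs ht

theorem Bmat_eq_vandermonde_transpose_mul_diagonal (m : ℕ) (ω : ℝ) :
    Bmat m ω = (Matrix.vandermonde fun k : Fin (m + 1) => -I * ((k : ℕ) : ℂ))ᵀ *
      Matrix.diagonal fun k : Fin (m + 1) => exp (-I * (ω : ℂ) * ((k : ℕ) : ℂ)) := by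
  ext p k
  simp [Bmat, Matrix.mul_diagonal, Matrix.vandermonde]

theorem isUnit_det_Bmat (m : ℕ) (ω : ℝ) : IsUnit (Bmat m ω).det := by
  have hnodes : Function.Injective fun k : Fin (m + 1) => -I * ((k : ℕ) : ℂ) :=
    (mul_right_injective₀ (neg_ne_zero.2 I_ne_zero)).comp
      (Nat.cast_injective.comp Fin.val_injective)
  rw [Bmat_eq_vandermonde_transpose_mul_diagonal, Matrix.det_mul, Matrix.det_transpose,
    Matrix.det_diagonal]
  exact (Matrix.det_vandermonde_ne_zero_iff.2 hnodes).isUnit.mul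
    (Finset.prod_ne_zero_iff.2 fun k _ => Complex.exp_ne_zero _).isUnit

theorem Bmat_zero (ω : ℝ) : Bmat 0 ω = 1 := by
  ext p k
  fin_cases p; fin_cases k
  simp [Bmat]

theorem Bmat_mulVec_apply (m : ℕ) (ω : ℝ) (y : ℤ → ℂ) (p : Fin (m + 1)) :
    (Bmat m ω *ᵥ fun k => y k) p = ∑ k : Fin (m + 1), momentTerm ω p y k := by
  simp only [Matrix.mulVec, dotProduct]
  refine Finset.sum_congr rfl fun k _ => ?_
  simp only [Bmat, Matrix.of_apply, momentTerm]
  push_cast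
  ring

theorem Bmat_mulVec_eq_neg_tsum_compl {m : ℕ} {ω : ℝ} {y : ℤ → ℂ}
    (hsum : ∀ p : Fin (m + 1), Summable (momentTerm ω p y))
    (hmoment : ∀ p : Fin (m + 1), ∑' t, momentTerm ω p y t = 0) :
    (Bmat m ω *ᵥ fun k => y k) =
      fun p : Fin (m + 1) => -∑' t : {t : ℤ // t ∉ Set.Icc (0 : ℤ) m}, momentTerm ω p y t := by
  funext p
  rw [Bmat_mulVec_apply, eq_neg_iff_add_eq_zero, ← tsum_eq_sum_fin_add_tsum_compl_Icc (hsum p),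
    hmoment p]

theorem recovered_values_sup_bound_general (ω₀ : ℝ) (m : ℕ)
    (x : ℤ → ℂ) (hx : Summable fun t : ℤ => |(t : ℝ)| ^ m * ‖x t‖)
    (xh : ℤ → ℂ)
    (hagree : ∀ t : ℤ, t ∉ Set.Icc (0 : ℤ) m → xh t = x t)
    (hdeg : ∀ p : Fin (m + 1),
      ∑' t : ℤ, (-Complex.I * (t : ℂ)) ^ (p : ℕ) *
        Complex.exp (-Complex.I * (ω₀ : ℂ) * (t : ℂ)) * xh t = 0) :
    (∀ k : Fin (m + 1),
      ‖xh ((k : ℕ) : ℤ)‖ ≤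
        linftyNorm ((Bmat m ω₀)⁻¹) *
          ∑' t : {t : ℤ // t ∉ Set.Icc (0 : ℤ) m}, |((t : ℤ) : ℝ)| ^ m * ‖x (t : ℤ)‖) ∧
    (m = 0 → ‖xh 0‖ ≤ ∑' t : {t : ℤ // t ≠ 0}, ‖x (t : ℤ)‖) := by
  have hbound (p : Fin (m + 1)) (t : ℤ) (ht : t ∉ Set.Icc (0 : ℤ) m) :
      ‖momentTerm ω₀ p xh t‖ ≤ |(t : ℝ)| ^ m * ‖x t‖ := by
    rw [← hagree t ht]
    exact norm_momentTerm_le p.is_le ω₀ xh (by rintro rfl; simp at ht)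
  have hsum (p : Fin (m + 1)) : Summable (momentTerm ω₀ p xh) :=
    hx.of_norm_bounded_eventually ((Set.finite_Icc 0 (m : ℤ)).eventually_cofinite_notMem.mono
      (hbound p))
  have hsolve := congrArg ((Bmat m ω₀)⁻¹ *ᵥ ·) (Bmat_mulVec_eq_neg_tsum_compl hsum hdeg)
  rw [Matrix.mulVec_mulVec, Matrix.nonsing_inv_mul _ (isUnit_det_Bmat m ω₀),
    Matrix.one_mulVec] at hsolve
  have htail (p : Fin (m + 1)) :
      ‖-∑' t : {t : ℤ // t ∉ Set.Icc (0 : ℤ) m}, momentTerm ω₀ p xh t‖ ≤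
        ∑' t : {t : ℤ // t ∉ Set.Icc (0 : ℤ) m}, |((t : ℤ) : ℝ)| ^ m * ‖x t‖ := by
    rw [norm_neg]
    exact tsum_of_norm_bounded (hx.subtype _).hasSum fun t => hbound p t t.2
  have hrecovered (k : Fin (m + 1)) : ‖xh k‖ ≤ linftyNorm (Bmat m ω₀)⁻¹ *
      ∑' t : {t : ℤ // t ∉ Set.Icc (0 : ℤ) m}, |((t : ℤ) : ℝ)| ^ m * ‖x t‖ := by
    rw [congrFun hsolve k]
    exact norm_mulVec_apply_le_linftyNorm_mul _ htail k
  refine ⟨hrecovered, ?_⟩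
  rintro rfl
  calc ‖xh 0‖ ≤ ∑' t : {t : ℤ // t ∉ Set.Icc (0 : ℤ) 0}, ‖x t‖ := by
        simpa [Bmat_zero, linftyNorm_one] using hrecovered 0
    _ = ∑' t : {t : ℤ // t ≠ 0}, ‖x t‖ :=
        tsum_congr_set_coe (fun t => ‖x t‖) (congrArg compl (Set.Icc_self 0))

theorem recovered_values_sup_bound (ω₀ : ℝ) (hω₀ : ω₀ ∈ Set.Ioc 0 Real.pi) (m : ℕ)
    (x : ℤ → ℂ) (hx : Summable fun t : ℤ => |(t : ℝ)| ^ m * ‖x t‖)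
    (xh : ℤ → ℂ)
    (hagree : ∀ t : ℤ, t ∉ Set.Icc (0 : ℤ) m → xh t = x t)
    (hdeg : ∀ p : Fin (m + 1),
      ∑' t : ℤ, (-Complex.I * (t : ℂ)) ^ (p : ℕ) *
        Complex.exp (-Complex.I * (ω₀ : ℂ) * (t : ℂ)) * xh t = 0) :
    (∀ k : Fin (m + 1),
      ‖xh ((k : ℕ) : ℤ)‖ ≤
        linftyNorm ((Bmat m ω₀)⁻¹) *
          ∑' t : {t : ℤ // t ∉ Set.Icc (0 : ℤ) m}, |((t : ℤ) : ℝ)| ^ m * ‖x (t : ℤ)‖) ∧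
    (m = 0 → ‖xh 0‖ ≤ ∑' t : {t : ℤ // t ≠ 0}, ‖x (t : ℤ)‖) :=
  recovered_values_sup_bound_general ω₀ m x hx xh hagree hdeg
end
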